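/- arXiv:1901.09161 — 11 statements merged into one kernel-verified Lean document; each statement's English description precedes it below -/
import Mathlib

section
/- Let t ≥ 1 and let g_1,…,g_t be admissible revenue functions. Suppose (ṽ_1,…,ṽ_t) with multiplier λ_t ≥ 0 satisfies the KKT conditions for the offline problem on g_1,…,g_t, and (v̄_1,…,v̄_{t−1}) with multiplier λ_{t−1} ≥ 0 satisfies the KKT conditions for the offline problem on g_1,…,g_{t−1}, where the KKT conditions for (v,λ) on input h_1,…,h_n mean: v_τ ∈ [0,Δ] for all τ, ∑_τ v_τ ≤ Δ, λ·(Δ − ∑_τ v_τ) = 0, and for each τ either (v_τ = 0 and h_τ'(0) ≤ λ) or h_τ'(v_τ) = λ. Suppose moreover λ_{t−1} ≤ λ_t. Then g_t(ṽ_t) − λ_t·ṽ_t ≤ η(g_1,…,g_t) − η(g_1,…,g_{t−1}) ≤ g_t(ṽ_t) − λ_{t−1}·ṽ_t ≤ g_t(v̂_t), where v̂_t is any maximizer of g_t over [0,Δ]. -/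
/-- An admissible revenue function on `[0, Δ]` with base price in `[m, M]`. -/
def Admissible (Δ m M : ℝ) (g : ℝ → ℝ) : Prop :=
  ConcaveOn ℝ (Set.Icc 0 Δ) g ∧ MonotoneOn g (Set.Icc 0 Δ) ∧
  (∀ x ∈ Set.Icc (0:ℝ) Δ, DifferentiableAt ℝ g x) ∧
  g 0 = 0 ∧ deriv g 0 ∈ Set.Icc m M

/-- Offline optimum for the first `n` revenue functions with inventory `Δ`. -/
noncomputable def eta (Δ : ℝ) (g : ℕ → ℝ → ℝ) (n : ℕ) : ℝ :=
  sSup { r : ℝ | ∃ v : ℕ → ℝ, (∀ t < n, 0 ≤ v t) ∧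
    (∑ t ∈ Finset.range n, v t) ≤ Δ ∧ r = ∑ t ∈ Finset.range n, g t (v t) }

/-- The KKT conditions for the offline problem on the first n inputs. -/
def KKT (Δ : ℝ) (g : ℕ → ℝ → ℝ) (n : ℕ) (v : ℕ → ℝ) (lam : ℝ) : Prop :=
  (∀ τ < n, v τ ∈ Set.Icc 0 Δ) ∧ (∑ τ ∈ Finset.range n, v τ ≤ Δ) ∧
  lam * (Δ - ∑ τ ∈ Finset.range n, v τ) = 0 ∧
  ∀ τ < n, (v τ = 0 ∧ deriv (g τ) 0 ≤ lam) ∨ deriv (g τ) (v τ) = lam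

/-- Gradient inequality for concave differentiable functions. -/
lemma grad_ineq {Δ : ℝ} {g : ℝ → ℝ} (hc : ConcaveOn ℝ (Set.Icc 0 Δ) g)
    (hd : ∀ x ∈ Set.Icc (0:ℝ) Δ, DifferentiableAt ℝ g x)
    {x y : ℝ} (hx : x ∈ Set.Icc 0 Δ) (hy : y ∈ Set.Icc 0 Δ) :
    g y ≤ g x + deriv g x * (y - x) := by
  rcases lt_trichotomy x y with h | h | h
  · have := hc.slope_le_deriv hx hy h (hd x hx)
    rw [slope_def_field, div_le_iff₀ (by linarith)] at this
    linarith
  · simp [h]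
  · have := hc.deriv_le_slope hy hx h (hd x hx)
    rw [slope_def_field, le_div_iff₀ (by linarith)] at this
    nlinarith

/-- Per-term KKT inequality. -/
lemma kkt_term {Δ m M : ℝ} {g : ℝ → ℝ} (hg : Admissible Δ m M g)
    {v w lam : ℝ} (hv : v ∈ Set.Icc 0 Δ) (hw : w ∈ Set.Icc 0 Δ) (hlam : 0 ≤ lam)
    (hK : (v = 0 ∧ deriv g 0 ≤ lam) ∨ deriv g v = lam) :
    g w ≤ g v + lam * (w - v) := by
  have h := grad_ineq hg.1 hg.2.2.1 hv hw
  rcases hK with ⟨hv0, hd⟩ | hd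
  · subst hv0
    nlinarith [hw.1]
  · rw [hd] at h; exact h

/-- A KKT point attains the offline optimum. -/
lemma kkt_isGreatest {Δ m M : ℝ} {g : ℕ → ℝ → ℝ} {n : ℕ} {v : ℕ → ℝ} {lam : ℝ}
    (hg : ∀ τ < n, Admissible Δ m M (g τ)) (hlam : 0 ≤ lam) (hK : KKT Δ g n v lam) :
    IsGreatest { r : ℝ | ∃ w : ℕ → ℝ, (∀ t < n, 0 ≤ w t) ∧
      (∑ t ∈ Finset.range n, w t) ≤ Δ ∧ r = ∑ t ∈ Finset.range n, g t (w t) }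
      (∑ τ ∈ Finset.range n, g τ (v τ)) := by
  obtain ⟨hv, hsum, hcs, hkkt⟩ := hK
  constructor
  · exact ⟨v, fun τ hτ => (hv τ hτ).1, hsum, rfl⟩
  · rintro r ⟨w, hw0, hwsum, rfl⟩
    have hwIcc : ∀ τ < n, w τ ∈ Set.Icc 0 Δ := by
      intro τ hτ
      refine ⟨hw0 τ hτ, le_trans ?_ hwsum⟩
      exact Finset.single_le_sum (fun i hi => hw0 i (Finset.mem_range.mp hi))
        (Finset.mem_range.mpr hτ)
    have key : ∀ τ ∈ Finset.range n, g τ (w τ) ≤ g τ (v τ) + lam * (w τ - v τ) := by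
      intro τ hτ
      rw [Finset.mem_range] at hτ
      exact kkt_term (hg τ hτ) (hv τ hτ) (hwIcc τ hτ) hlam (hkkt τ hτ)
    have h1 := Finset.sum_le_sum key
    rw [Finset.sum_add_distrib, ← Finset.mul_sum, Finset.sum_sub_distrib] at h1
    nlinarith [mul_le_mul_of_nonneg_left hwsum hlam]

/-- Bounds on the increment of the offline optimum (Lemma 2 of the paper). -/
theorem stmt1 (Δ m M : ℝ) (hΔ : 0 < Δ) (hm : 0 < m) (hmM : m ≤ M)
    (t : ℕ) (ht : 1 ≤ t) (g : ℕ → ℝ → ℝ) (hg : ∀ τ < t, Admissible Δ m M (g τ))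
    (vt : ℕ → ℝ) (lamt : ℝ) (hlamt : 0 ≤ lamt) (hK1 : KKT Δ g t vt lamt)
    (vb : ℕ → ℝ) (lamt1 : ℝ) (hlamt1 : 0 ≤ lamt1) (hK2 : KKT Δ g (t-1) vb lamt1)
    (hle : lamt1 ≤ lamt)
    (vhat : ℝ) (hvhat : vhat ∈ Set.Icc 0 Δ)
    (hmax : IsMaxOn (g (t-1)) (Set.Icc 0 Δ) vhat) :
    g (t-1) (vt (t-1)) - lamt * vt (t-1) ≤ eta Δ g t - eta Δ g (t-1) ∧
    eta Δ g t - eta Δ g (t-1) ≤ g (t-1) (vt (t-1)) - lamt1 * vt (t-1) ∧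
    g (t-1) (vt (t-1)) - lamt1 * vt (t-1) ≤ g (t-1) vhat := by
  obtain ⟨s, rfl⟩ : ∃ s, t = s + 1 := ⟨t - 1, (Nat.succ_pred_eq_of_pos ht).symm⟩
  simp only [Nat.add_sub_cancel] at *
  have hg' : ∀ τ < s, Admissible Δ m M (g τ) := fun τ hτ => hg τ (by omega)
  have hGt := kkt_isGreatest hg hlamt hK1
  have hGs := kkt_isGreatest hg' hlamt1 hK2
  have het : eta Δ g (s+1) = ∑ τ ∈ Finset.range (s+1), g τ (vt τ) := hGt.csSup_eq
  have hes : eta Δ g s = ∑ τ ∈ Finset.range s, g τ (vb τ) := hGs.csSup_eq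
  obtain ⟨hv1, hsum1, hcs1, hkkt1⟩ := hK1
  obtain ⟨hv2, hsum2, hcs2, hkkt2⟩ := hK2
  have hsplit : ∑ τ ∈ Finset.range (s+1), g τ (vt τ)
      = ∑ τ ∈ Finset.range s, g τ (vt τ) + g s (vt s) := Finset.sum_range_succ _ _
  have hvsplit : ∑ τ ∈ Finset.range (s+1), vt τ
      = ∑ τ ∈ Finset.range s, vt τ + vt s := Finset.sum_range_succ _ _
  have hvs : vt s ∈ Set.Icc 0 Δ := hv1 s (by omega)
  -- lower bound: eta s ≤ ∑_{τ<s} g τ (vt τ) + lamt * vt s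
  have hlow : ∑ τ ∈ Finset.range s, g τ (vb τ)
      ≤ ∑ τ ∈ Finset.range s, g τ (vt τ) + lamt * vt s := by
    have key : ∀ τ ∈ Finset.range s, g τ (vb τ) ≤ g τ (vt τ) + lamt * (vb τ - vt τ) := by
      intro τ hτ
      rw [Finset.mem_range] at hτ
      exact kkt_term (hg' τ hτ) (hv1 τ (by omega)) (hv2 τ hτ) hlamt (hkkt1 τ (by omega))
    have h1 := Finset.sum_le_sum key
    rw [Finset.sum_add_distrib, ← Finset.mul_sum, Finset.sum_sub_distrib] at h1
    have h2 : ∑ τ ∈ Finset.range s, vb τ ≤ Δ := hsum2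
    nlinarith [mul_le_mul_of_nonneg_left h2 hlamt]
  -- upper bound: ∑_{τ<s} g τ (vt τ) ≤ eta s - lamt1 * vt s
  have hup : ∑ τ ∈ Finset.range s, g τ (vt τ)
      ≤ ∑ τ ∈ Finset.range s, g τ (vb τ) - lamt1 * vt s := by
    have key : ∀ τ ∈ Finset.range s, g τ (vt τ) ≤ g τ (vb τ) + lamt1 * (vt τ - vb τ) := by
      intro τ hτ
      rw [Finset.mem_range] at hτ
      exact kkt_term (hg' τ hτ) (hv2 τ hτ) (hv1 τ (by omega)) hlamt1 (hkkt2 τ hτ)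
    have h1 := Finset.sum_le_sum key
    rw [Finset.sum_add_distrib, ← Finset.mul_sum, Finset.sum_sub_distrib] at h1
    have h2 : ∑ τ ∈ Finset.range s, vt τ ≤ Δ - vt s := by linarith [hvsplit ▸ hsum1]
    nlinarith [mul_le_mul_of_nonneg_left h2 hlamt1]
  refine ⟨by rw [het, hes]; linarith, by rw [het, hes]; linarith, ?_⟩
  have := hmax hvs
  simp only [Set.mem_setOf_eq] at this
  nlinarith [hvs.1]
end

section
/- Let t ≥ 1, let g_1,…,g_t be admissible revenue functions, let π ≥ 1, and let v̂_t ∈ [0,Δ] be a maximizer of g_t over [0,Δ]. Then there exists v̄ ∈ [0, v̂_t] such that π·g_t(v̄) = η(g_1,…,g_t) − η(g_1,…,g_{t−1}); in particular the CR-Pursuit(π) action is always well defined and can be chosen not to exceed the per-slot maximizer. -/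
/-- The CR-Pursuit(π) action is well defined and can be chosen in [0, v̂ₜ]. -/
theorem stmt3 (Δ m M : ℝ) (hΔ : 0 < Δ) (hm : 0 < m) (hmM : m ≤ M)
    (t : ℕ) (ht : 1 ≤ t) (g : ℕ → ℝ → ℝ) (hg : ∀ τ < t, Admissible Δ m M (g τ))
    (pi : ℝ) (hpi : 1 ≤ pi)
    (vhat : ℝ) (hvhat : vhat ∈ Set.Icc 0 Δ)
    (hmax : IsMaxOn (g (t-1)) (Set.Icc 0 Δ) vhat) :
    ∃ vb ∈ Set.Icc 0 vhat, pi * g (t-1) vb = eta Δ g t - eta Δ g (t-1) := by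
  obtain ⟨s, rfl⟩ : ∃ s, t = s + 1 := ⟨t - 1, (Nat.succ_pred_eq_of_pos ht).symm⟩
  have hs1 : s + 1 - 1 = s := by omega
  rw [hs1] at hmax ⊢
  obtain ⟨hv0, hvΔ⟩ := hvhat
  have hzero : ∀ τ < s + 1, g τ 0 = 0 := fun τ hτ => (hg τ hτ).2.2.2.1
  have hmono : ∀ τ < s + 1, MonotoneOn (g τ) (Set.Icc 0 Δ) := fun τ hτ => (hg τ hτ).2.1
  set S : ℕ → Set ℝ := fun n => { r : ℝ | ∃ v : ℕ → ℝ, (∀ t < n, 0 ≤ v t) ∧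
    (∑ t ∈ Finset.range n, v t) ≤ Δ ∧ r = ∑ t ∈ Finset.range n, g t (v t) } with hS
  have hetaeq : ∀ n, eta Δ g n = sSup (S n) := fun n => rfl
  have hmem0 : ∀ n ≤ s + 1, (0:ℝ) ∈ S n := by
    intro n hn
    refine ⟨fun _ => 0, fun _ _ => le_refl 0, by simpa using hΔ.le, ?_⟩
    rw [Finset.sum_congr rfl fun τ hτ =>
      hzero τ (lt_of_lt_of_le (Finset.mem_range.mp hτ) hn)]
    simp
  have hbdd : ∀ n ≤ s + 1, BddAbove (S n) := by
    intro n hn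
    refine ⟨∑ τ ∈ Finset.range n, g τ Δ, fun r hr => ?_⟩
    obtain ⟨v, hvnn, hvsum, rfl⟩ := hr
    apply Finset.sum_le_sum
    intro τ hτ
    have hτn := Finset.mem_range.mp hτ
    have hvτΔ : v τ ≤ Δ := le_trans
      (Finset.single_le_sum (fun i hi => hvnn i (Finset.mem_range.mp hi)) hτ) hvsum
    exact hmono τ (lt_of_lt_of_le hτn hn) ⟨hvnn τ hτn, hvτΔ⟩ ⟨hΔ.le, le_refl Δ⟩ hvτΔ
  have hle1 : eta Δ g s ≤ eta Δ g (s+1) := by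
    rw [hetaeq, hetaeq]
    apply csSup_le (Set.nonempty_of_mem (hmem0 s (Nat.le_succ s)))
    intro r hr
    obtain ⟨v, hvnn, hvsum, rfl⟩ := hr
    apply le_csSup (hbdd (s+1) le_rfl)
    refine ⟨fun τ => if τ = s then 0 else v τ, ?_, ?_, ?_⟩
    · intro τ hτ
      by_cases h : τ = s
      · simp [h]
      · simp only [if_neg h]; exact hvnn τ (by omega)
    · rw [Finset.sum_range_succ]
      have e1 : ∑ τ ∈ Finset.range s, (if τ = s then (0:ℝ) else v τ)
          = ∑ τ ∈ Finset.range s, v τ :=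
        Finset.sum_congr rfl fun τ hτ => if_neg (Nat.ne_of_lt (Finset.mem_range.mp hτ))
      rw [e1, if_pos rfl]
      simpa using hvsum
    · rw [Finset.sum_range_succ]
      have e2 : ∑ τ ∈ Finset.range s, g τ (if τ = s then (0:ℝ) else v τ)
          = ∑ τ ∈ Finset.range s, g τ (v τ) :=
        Finset.sum_congr rfl fun τ hτ => by
          rw [if_neg (Nat.ne_of_lt (Finset.mem_range.mp hτ))]
      simp only [e2, if_true, eq_self_iff_true, hzero s (Nat.lt_succ_self s)]
      ring
  have hgv0 : 0 ≤ g s vhat := by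
    have := hmono s (Nat.lt_succ_self s) ⟨le_refl 0, hΔ.le⟩ ⟨hv0, hvΔ⟩ hv0
    rw [hzero s (Nat.lt_succ_self s)] at this
    exact this
  have hle2 : eta Δ g (s+1) ≤ eta Δ g s + g s vhat := by
    rw [hetaeq, hetaeq]
    apply csSup_le (Set.nonempty_of_mem (hmem0 (s+1) le_rfl))
    intro r hr
    obtain ⟨v, hvnn, hvsum, rfl⟩ := hr
    rw [Finset.sum_range_succ]
    have h1 : ∑ τ ∈ Finset.range s, g τ (v τ) ≤ sSup (S s) := by
      apply le_csSup (hbdd s (Nat.le_succ s))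
      refine ⟨v, fun τ hτ => hvnn τ (by omega), ?_, rfl⟩
      calc ∑ τ ∈ Finset.range s, v τ
          ≤ ∑ τ ∈ Finset.range (s+1), v τ := by
            rw [Finset.sum_range_succ]
            linarith [hvnn s (Nat.lt_succ_self s)]
        _ ≤ Δ := hvsum
    have hvs : v s ∈ Set.Icc (0:ℝ) Δ := by
      refine ⟨hvnn s (Nat.lt_succ_self s), le_trans ?_ hvsum⟩
      exact Finset.single_le_sum (fun i hi => hvnn i (Finset.mem_range.mp hi))
        (Finset.mem_range.mpr (Nat.lt_succ_self s))
    have h2 : g s (v s) ≤ g s vhat := hmax hvs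
    linarith
  have hcont : ContinuousOn (fun x => pi * g s x) (Set.Icc 0 vhat) := by
    apply ContinuousOn.mul continuousOn_const
    intro x hx
    have hxΔ : x ∈ Set.Icc (0:ℝ) Δ := ⟨hx.1, le_trans hx.2 hvΔ⟩
    exact ((hg s (Nat.lt_succ_self s)).2.2.1 x hxΔ).continuousAt.continuousWithinAt
  have hy : eta Δ g (s+1) - eta Δ g s ∈
      Set.Icc ((fun x => pi * g s x) 0) ((fun x => pi * g s x) vhat) := by
    simp only [hzero s (Nat.lt_succ_self s), mul_zero]
    constructor
    · linarith
    · nlinarith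
  obtain ⟨vb, hvb, hvbeq⟩ := intermediate_value_Icc hv0 hcont hy
  exact ⟨vb, hvb, hvbeq⟩
end

section
/- Let τ ≥ 1 and let g_1,…,g_{τ+1} be admissible revenue functions. Then η(g_1,…,g_{τ−1},g_τ) − η(g_1,…,g_{τ−1}) ≥ η(g_1,…,g_{τ−1},g_{τ+1},g_τ) − η(g_1,…,g_{τ−1},g_{τ+1}); that is, interchanging g_τ and g_{τ+1} in the input sequence (so that g_{τ+1} arrives first) does not increase the increment of the offline optimum contributed by g_τ at the time it appears. -/
namespace Stmt4Aux

/-- The set whose supremum is `eta`. -/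
def etaSet (Δ : ℝ) (g : ℕ → ℝ → ℝ) (n : ℕ) : Set ℝ :=
  { r : ℝ | ∃ v : ℕ → ℝ, (∀ t < n, 0 ≤ v t) ∧
    (∑ t ∈ Finset.range n, v t) ≤ Δ ∧ r = ∑ t ∈ Finset.range n, g t (v t) }

lemma eta_eq (Δ : ℝ) (g : ℕ → ℝ → ℝ) (n : ℕ) : eta Δ g n = sSup (etaSet Δ g n) := rfl

lemma zero_mem {Δ : ℝ} (hΔ : 0 ≤ Δ) {g : ℕ → ℝ → ℝ} {n : ℕ}
    (hg : ∀ i < n, g i 0 = 0) : (0:ℝ) ∈ etaSet Δ g n := by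
  refine ⟨fun _ => 0, fun _ _ => le_refl 0, by simpa, ?_⟩
  rw [Finset.sum_congr rfl fun i hi => hg i (Finset.mem_range.mp hi)]
  simp

lemma mem_Icc_of_alloc {Δ : ℝ} {n : ℕ} {v : ℕ → ℝ} (hv : ∀ t < n, 0 ≤ v t)
    (hsum : (∑ t ∈ Finset.range n, v t) ≤ Δ) {i : ℕ} (hi : i < n) :
    v i ∈ Set.Icc (0:ℝ) Δ := by
  refine ⟨hv i hi, le_trans ?_ hsum⟩
  exact Finset.single_le_sum (fun j hj => hv j (Finset.mem_range.mp hj))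
    (Finset.mem_range.mpr hi)

lemma bddAbove_etaSet {Δ : ℝ} (hΔ : 0 ≤ Δ) {g : ℕ → ℝ → ℝ} {n : ℕ}
    (hg : ∀ i < n, MonotoneOn (g i) (Set.Icc 0 Δ)) :
    BddAbove (etaSet Δ g n) := by
  refine ⟨∑ i ∈ Finset.range n, g i Δ, ?_⟩
  rintro r ⟨v, hv, hsum, rfl⟩
  apply Finset.sum_le_sum
  intro i hi
  have hi' := Finset.mem_range.mp hi
  have hmem := mem_Icc_of_alloc hv hsum hi'
  exact hg i hi' hmem (Set.mem_Icc.mpr ⟨hΔ, le_refl Δ⟩) hmem.2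

/-- Exchange inequality for a concave function: moving mass `θ * max (y - x) 0`
from `y` to `x` does not decrease the total value. -/
lemma concave_exchange {Δ : ℝ} {g : ℝ → ℝ} (hg : ConcaveOn ℝ (Set.Icc 0 Δ) g)
    {x y θ : ℝ} (hx : x ∈ Set.Icc 0 Δ) (hy : y ∈ Set.Icc 0 Δ)
    (hθ0 : 0 ≤ θ) (hθ1 : θ ≤ 1) :
    g x + g y ≤ g (x + θ * max (y - x) 0) + g (y - θ * max (y - x) 0) := by
  rcases le_or_gt y x with h | h
  · rw [max_eq_right (by linarith)]
    simp
  · rw [max_eq_left (by linarith)]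
    have h1 := hg.2 hx hy (by linarith : (0:ℝ) ≤ 1 - θ) hθ0 (by ring)
    have h2 := hg.2 hx hy hθ0 (by linarith : (0:ℝ) ≤ 1 - θ) (by ring)
    have e1 : (1-θ) • x + θ • y = x + θ * (y - x) := by
      simp only [smul_eq_mul]; ring
    have e2 : θ • x + (1-θ) • y = y - θ * (y - x) := by
      simp only [smul_eq_mul]; ring
    rw [e1] at h1
    rw [e2] at h2
    simp only [smul_eq_mul] at h1 h2
    nlinarith [h1, h2]

end Stmt4Aux

open Stmt4Aux in
/-- Interchanging two consecutive revenue functions so that the later one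
arrives first does not increase the increment of the offline optimum
contributed by the earlier one (Lemma 3 of the paper).  Here the function
that originally arrives at (0-indexed) position t is g t. -/
theorem stmt4 (Δ m M : ℝ) (hΔ : 0 < Δ) (hm : 0 < m) (hmM : m ≤ M)
    (t : ℕ) (g : ℕ → ℝ → ℝ) (hg : ∀ i < t + 2, Admissible Δ m M (g i)) :
    eta Δ (fun i => if i = t then g (t+1) else if i = t+1 then g t else g i) (t+2) -
      eta Δ (fun i => if i = t then g (t+1) else if i = t+1 then g t else g i) (t+1) ≤
    eta Δ g (t+1) - eta Δ g t := by
  set g' : ℕ → ℝ → ℝ := fun i => if i = t then g (t+1) else if i = t+1 then g t else g i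
    with hg'def
  have hΔ0 : (0:ℝ) ≤ Δ := le_of_lt hΔ
  have hg'lt : ∀ i < t, g' i = g i := by
    intro i hi
    simp only [hg'def, if_neg (by omega : i ≠ t), if_neg (by omega : i ≠ t + 1)]
  have hg't : g' t = g (t+1) := by simp [hg'def]
  have hg't1 : g' (t+1) = g t := by simp [hg'def]
  have hg'adm : ∀ i < t + 2, Admissible Δ m M (g' i) := by
    intro i hi
    simp only [hg'def]
    split_ifs with h1 h2
    · exact hg (t+1) (by omega)
    · exact hg t (by omega)
    · exact hg i (by omega)
  -- basic facts about the four sets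
  have hgmono : ∀ n ≤ t + 2, ∀ i < n, MonotoneOn (g i) (Set.Icc 0 Δ) :=
    fun n hn i hi => (hg i (by omega)).2.1
  have hg'mono : ∀ n ≤ t + 2, ∀ i < n, MonotoneOn (g' i) (Set.Icc 0 Δ) :=
    fun n hn i hi => (hg'adm i (by omega)).2.1
  have hgzero : ∀ n ≤ t + 2, ∀ i < n, g i 0 = 0 :=
    fun n hn i hi => (hg i (by omega)).2.2.2.1
  have hg'zero : ∀ n ≤ t + 2, ∀ i < n, g' i 0 = 0 :=
    fun n hn i hi => (hg'adm i (by omega)).2.2.2.1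
  have hbddA : BddAbove (etaSet Δ g' (t+2)) := bddAbove_etaSet hΔ0 (hg'mono _ le_rfl)
  have hbddB : BddAbove (etaSet Δ g' (t+1)) := bddAbove_etaSet hΔ0 (hg'mono _ (by omega))
  have hbddC : BddAbove (etaSet Δ g (t+1)) := bddAbove_etaSet hΔ0 (hgmono _ (by omega))
  have hbddD : BddAbove (etaSet Δ g t) := bddAbove_etaSet hΔ0 (hgmono _ (by omega))
  have hneA : (etaSet Δ g' (t+2)).Nonempty := ⟨0, zero_mem hΔ0 (hg'zero _ le_rfl)⟩
  have hneB : (etaSet Δ g' (t+1)).Nonempty := ⟨0, zero_mem hΔ0 (hg'zero _ (by omega))⟩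
  have hneC : (etaSet Δ g (t+1)).Nonempty := ⟨0, zero_mem hΔ0 (hgzero _ (by omega))⟩
  have hneD : (etaSet Δ g t).Nonempty := ⟨0, zero_mem hΔ0 (hgzero _ (by omega))⟩
  -- The key exchange inequality
  have key : ∀ r ∈ etaSet Δ g' (t+2), ∀ s ∈ etaSet Δ g t,
      r + s ≤ sSup (etaSet Δ g (t+1)) + sSup (etaSet Δ g' (t+1)) := by
    rintro r ⟨v, hv, hvs, rfl⟩ s ⟨w, hw, hws, rfl⟩
    -- notation
    set b : ℝ := v t with hbdef
    set a : ℝ := v (t+1) with hadef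
    have hb0 : 0 ≤ b := hv t (by omega)
    have ha0 : 0 ≤ a := hv (t+1) (by omega)
    have hvsplit : ∑ i ∈ Finset.range (t+2), v i
        = (∑ i ∈ Finset.range t, v i) + b + a := by
      rw [Finset.sum_range_succ, Finset.sum_range_succ]
    have hvs' : (∑ i ∈ Finset.range t, v i) + b + a ≤ Δ := by rw [← hvsplit]; exact hvs
    set p : ℕ → ℝ := fun i => max (w i - v i) 0 with hpdef
    have hp0 : ∀ i, 0 ≤ p i := fun i => le_max_right _ _
    have hpge : ∀ i, w i - v i ≤ p i := fun i => le_max_left _ _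
    set P : ℝ := ∑ i ∈ Finset.range t, p i with hPdef
    have hP0 : 0 ≤ P := Finset.sum_nonneg fun i _ => hp0 i
    have hPw : (∑ i ∈ Finset.range t, w i) - (∑ i ∈ Finset.range t, v i) ≤ P := by
      rw [← Finset.sum_sub_distrib]
      exact Finset.sum_le_sum fun i _ => hpge i
    set δ : ℝ := max ((∑ i ∈ Finset.range t, w i) - (Δ - b)) 0 with hδdef
    have hδ0 : 0 ≤ δ := le_max_right _ _
    have hδb : δ ≤ b := max_le (by linarith) hb0
    have hδlb : (∑ i ∈ Finset.range t, w i) - (Δ - b) ≤ δ := le_max_left _ _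
    have hδP : δ ≤ P := max_le (by linarith) hP0
    set θ : ℝ := if P = 0 then 0 else δ / P with hθdef
    have hθ0 : 0 ≤ θ := by
      rw [hθdef]; split_ifs with h
      · exact le_refl 0
      · exact div_nonneg hδ0 hP0
    have hθ1 : θ ≤ 1 := by
      rw [hθdef]; split_ifs with h
      · exact zero_le_one
      · exact (div_le_one (lt_of_le_of_ne hP0 (Ne.symm h))).mpr hδP
    have hθP : θ * P = δ := by
      rw [hθdef]; split_ifs with h
      · rw [h, mul_zero]
        symm
        rw [hδdef, max_eq_right]
        have : (∑ i ∈ Finset.range t, w i) ≤ ∑ i ∈ Finset.range t, v i := by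
          rw [hPdef] at h; linarith [hPw, h.symm ▸ hP0]
        have hP0' : P = 0 := h
        have hle : (∑ i ∈ Finset.range t, w i) - (∑ i ∈ Finset.range t, v i) ≤ 0 := by
          rw [← hP0']; exact hPw
        linarith
      · field_simp
    -- the two candidate allocations
    set u1 : ℕ → ℝ := fun i => if i = t then a else v i + θ * p i with hu1def
    set u2 : ℕ → ℝ := fun i => if i = t then b else w i - θ * p i with hu2def
    have hθp : ∀ i, θ * p i ≤ p i := fun i => by
      nlinarith [hp0 i]
    have hθp0 : ∀ i, 0 ≤ θ * p i := fun i => mul_nonneg hθ0 (hp0 i)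
    -- feasibility of u1
    have hu1nn : ∀ i < t + 1, 0 ≤ u1 i := by
      intro i hi
      rw [hu1def]
      dsimp only
      split_ifs with h
      · exact ha0
      · have : 0 ≤ v i := hv i (by omega)
        linarith [hθp0 i]
    have hsum1 : ∑ i ∈ Finset.range (t+1), u1 i
        = (∑ i ∈ Finset.range t, v i) + δ + a := by
      rw [Finset.sum_range_succ]
      have h1 : ∀ i ∈ Finset.range t, u1 i = v i + θ * p i := by
        intro i hi
        have := Finset.mem_range.mp hi
        rw [hu1def]; dsimp only; rw [if_neg (by omega)]
      rw [Finset.sum_congr rfl h1, Finset.sum_add_distrib, ← Finset.mul_sum, ← hPdef, hθP]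
      rw [hu1def]; dsimp only; rw [if_pos rfl]
    have hu1sum : ∑ i ∈ Finset.range (t+1), u1 i ≤ Δ := by
      rw [hsum1]; linarith
    -- feasibility of u2
    have hu2nn : ∀ i < t + 1, 0 ≤ u2 i := by
      intro i hi
      rw [hu2def]
      dsimp only
      split_ifs with h
      · exact hb0
      · have h1 : 0 ≤ w i := hw i (by omega)
        have h2 : θ * p i ≤ p i := hθp i
        have h4 : w i - p i ≥ 0 := by
          rw [hpdef]; dsimp only
          rcases le_total (w i) (v i) with hle | hle
          · rw [max_eq_right (by linarith)]; linarith
          · rw [max_eq_left (by linarith)]; linarith [hv i (by omega : i < t + 2)]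
        linarith
    have hsum2 : ∑ i ∈ Finset.range (t+1), u2 i
        = (∑ i ∈ Finset.range t, w i) - δ + b := by
      rw [Finset.sum_range_succ]
      have h1 : ∀ i ∈ Finset.range t, u2 i = w i - θ * p i := by
        intro i hi
        have := Finset.mem_range.mp hi
        rw [hu2def]; dsimp only; rw [if_neg (by omega)]
      rw [Finset.sum_congr rfl h1, Finset.sum_sub_distrib, ← Finset.mul_sum, ← hPdef, hθP]
      rw [hu2def]; dsimp only; rw [if_pos rfl]
    have hu2sum : ∑ i ∈ Finset.range (t+1), u2 i ≤ Δ := by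
      rw [hsum2]; linarith
    -- the values of the two candidate allocations
    have hmem1 : (∑ i ∈ Finset.range (t+1), g i (u1 i)) ∈ etaSet Δ g (t+1) :=
      ⟨u1, hu1nn, hu1sum, rfl⟩
    have hmem2 : (∑ i ∈ Finset.range (t+1), g' i (u2 i)) ∈ etaSet Δ g' (t+1) :=
      ⟨u2, hu2nn, hu2sum, rfl⟩
    have hle1 : (∑ i ∈ Finset.range (t+1), g i (u1 i)) ≤ sSup (etaSet Δ g (t+1)) :=
      le_csSup hbddC hmem1
    have hle2 : (∑ i ∈ Finset.range (t+1), g' i (u2 i)) ≤ sSup (etaSet Δ g' (t+1)) :=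
      le_csSup hbddB hmem2
    -- rewrite the sums
    have hrsplit : ∑ i ∈ Finset.range (t+2), g' i (v i)
        = (∑ i ∈ Finset.range t, g i (v i)) + g (t+1) b + g t a := by
      rw [Finset.sum_range_succ, Finset.sum_range_succ, hg't, hg't1]
      congr 1
      congr 1
      exact Finset.sum_congr rfl fun i hi => by
        rw [hg'lt i (Finset.mem_range.mp hi)]
    have h1split : ∑ i ∈ Finset.range (t+1), g i (u1 i)
        = (∑ i ∈ Finset.range t, g i (v i + θ * p i)) + g t a := by
      rw [Finset.sum_range_succ]
      congr 1
      · exact Finset.sum_congr rfl fun i hi => by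
          have := Finset.mem_range.mp hi
          rw [hu1def]; dsimp only; rw [if_neg (by omega)]
      · rw [hu1def]; dsimp only; rw [if_pos rfl]
    have h2split : ∑ i ∈ Finset.range (t+1), g' i (u2 i)
        = (∑ i ∈ Finset.range t, g i (w i - θ * p i)) + g (t+1) b := by
      rw [Finset.sum_range_succ, hg't]
      congr 1
      · exact Finset.sum_congr rfl fun i hi => by
          have hi' := Finset.mem_range.mp hi
          rw [hg'lt i hi', hu2def]; dsimp only; rw [if_neg (by omega)]
      · rw [hu2def]; dsimp only; rw [if_pos rfl]
    -- the concavity step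
    have hconc : (∑ i ∈ Finset.range t, g i (v i)) + (∑ i ∈ Finset.range t, g i (w i))
        ≤ (∑ i ∈ Finset.range t, g i (v i + θ * p i))
          + (∑ i ∈ Finset.range t, g i (w i - θ * p i)) := by
      rw [← Finset.sum_add_distrib, ← Finset.sum_add_distrib]
      apply Finset.sum_le_sum
      intro i hi
      have hi' := Finset.mem_range.mp hi
      have hvmem : v i ∈ Set.Icc (0:ℝ) Δ := mem_Icc_of_alloc hv hvs (by omega)
      have hwmem : w i ∈ Set.Icc (0:ℝ) Δ := mem_Icc_of_alloc hw hws hi'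
      have := concave_exchange (hg i (by omega)).1 hvmem hwmem hθ0 hθ1
      rw [hpdef]
      exact this
    rw [hrsplit]
    linarith
  -- conclude
  rw [eta_eq, eta_eq, eta_eq, eta_eq]
  have hfinal : sSup (etaSet Δ g' (t+2)) + sSup (etaSet Δ g t)
      ≤ sSup (etaSet Δ g (t+1)) + sSup (etaSet Δ g' (t+1)) := by
    have h1 : sSup (etaSet Δ g' (t+2))
        ≤ sSup (etaSet Δ g (t+1)) + sSup (etaSet Δ g' (t+1)) - sSup (etaSet Δ g t) := by
      apply csSup_le hneA
      intro r hr
      have h2 : sSup (etaSet Δ g t)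
          ≤ sSup (etaSet Δ g (t+1)) + sSup (etaSet Δ g' (t+1)) - r := by
        apply csSup_le hneD
        intro s hs
        linarith [key r hr s hs]
      linarith
    linarith
  linarith
end

section
/- Let τ ≥ 1 and let g_1,…,g_τ : ℝ → ℝ each be concave and differentiable on [0,Δ]. Let v̄_1,…,v̄_τ and a_1,…,a_τ lie in [0,Δ] and suppose: (i) the marginal values g_t'(v̄_t) are nondecreasing in t and g_τ'(v̄_τ) ≥ 0; (ii) ∑_{ξ=1}^{t} a_ξ ≥ ∑_{ξ=1}^{t} v̄_ξ for every t ≤ τ−1; and (iii) ∑_{ξ=1}^{τ} a_ξ ≤ ∑_{ξ=1}^{τ} v̄_ξ. Then ∑_{ξ=1}^{τ} g_ξ(a_ξ) ≤ ∑_{ξ=1}^{τ} g_ξ(v̄_ξ). (This is the key Abel-summation inequality showing that any deterministic online algorithm cannot beat CR-Pursuit on the worst-case input with nondecreasing marginals.) -/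
lemma tangent_le (Δ : ℝ) (f : ℝ → ℝ) (hf : ConcaveOn ℝ (Set.Icc 0 Δ) f)
    (v a : ℝ) (hv : v ∈ Set.Icc 0 Δ) (ha : a ∈ Set.Icc 0 Δ)
    (hd : DifferentiableAt ℝ f v) :
    f a ≤ f v + deriv f v * (a - v) := by
  rcases lt_trichotomy a v with h | h | h
  · have := hf.deriv_le_slope ha hv h hd
    rw [slope_def_field, le_div_iff₀ (by linarith)] at this
    nlinarith
  · simp [h]
  · have := hf.slope_le_deriv hv ha h hd
    rw [slope_def_field, div_le_iff₀ (by linarith)] at this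
    nlinarith

/-- The key Abel-summation inequality: any feasible online action sequence whose
prefix totals dominate those of a trajectory with nondecreasing marginals (but
whose final total does not) collects no more revenue. -/
theorem stmt6 (Δ : ℝ) (hΔ : 0 < Δ) (τ : ℕ) (hτ : 1 ≤ τ)
    (g : ℕ → ℝ → ℝ)
    (hconc : ∀ t < τ, ConcaveOn ℝ (Set.Icc 0 Δ) (g t))
    (hdiff : ∀ t < τ, ∀ x ∈ Set.Icc (0:ℝ) Δ, DifferentiableAt ℝ (g t) x)
    (vb a : ℕ → ℝ)
    (hvb : ∀ t < τ, vb t ∈ Set.Icc 0 Δ) (ha : ∀ t < τ, a t ∈ Set.Icc 0 Δ)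
    (hmono : ∀ s t, s ≤ t → t < τ → deriv (g s) (vb s) ≤ deriv (g t) (vb t))
    (hlast : 0 ≤ deriv (g (τ-1)) (vb (τ-1)))
    (hge : ∀ k < τ, ∑ ξ ∈ Finset.range k, vb ξ ≤ ∑ ξ ∈ Finset.range k, a ξ)
    (hle : ∑ ξ ∈ Finset.range τ, a ξ ≤ ∑ ξ ∈ Finset.range τ, vb ξ) :
    ∑ ξ ∈ Finset.range τ, g ξ (a ξ) ≤ ∑ ξ ∈ Finset.range τ, g ξ (vb ξ) := by
  set m : ℕ → ℝ := fun t => deriv (g t) (vb t) with hm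
  set d : ℕ → ℝ := fun t => a t - vb t with hd
  have key : ∑ t ∈ Finset.range τ, m t * d t ≤ 0 := by
    have abel := Finset.sum_range_by_parts m d τ
    simp only [smul_eq_mul] at abel
    rw [abel]
    have h1 : m (τ - 1) * ∑ i ∈ Finset.range τ, d i ≤ 0 := by
      apply mul_nonpos_of_nonneg_of_nonpos hlast
      simp only [hd, Finset.sum_sub_distrib]
      linarith
    have h2 : (0:ℝ) ≤ ∑ i ∈ Finset.range (τ - 1),
        (m (i + 1) - m i) * ∑ j ∈ Finset.range (i + 1), d j := by
      apply Finset.sum_nonneg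
      intro i hi
      rw [Finset.mem_range] at hi
      have hi' : i + 1 < τ := by omega
      apply mul_nonneg
      · have := hmono i (i + 1) (by omega) hi'
        linarith
      · have := hge (i + 1) hi'
        simp only [hd, Finset.sum_sub_distrib]
        linarith
    linarith
  have step : ∀ t < τ, g t (a t) ≤ g t (vb t) + m t * d t := by
    intro t ht
    exact tangent_le Δ (g t) (hconc t ht) (vb t) (a t) (hvb t ht) (ha t ht)
      (hdiff t ht (vb t) (hvb t ht))
  calc ∑ ξ ∈ Finset.range τ, g ξ (a ξ)
      ≤ ∑ ξ ∈ Finset.range τ, (g ξ (vb ξ) + m ξ * d ξ) := by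
        apply Finset.sum_le_sum
        intro i hi
        exact step i (Finset.mem_range.mp hi)
    _ = ∑ ξ ∈ Finset.range τ, g ξ (vb ξ) + ∑ ξ ∈ Finset.range τ, m ξ * d ξ := by
        rw [Finset.sum_add_distrib]
    _ ≤ ∑ ξ ∈ Finset.range τ, g ξ (vb ξ) := by linarith
end

section
/- Let g_1,…,g_T be admissible revenue functions with base prices p_t = g_t'(0), let π ≥ 1, and let v̄_1,…,v̄_T be a CR-Pursuit(π) trajectory for this input. Then for every threshold p ∈ [m,M], the total online revenue collected in the slots whose base price is at most p satisfies ∑_{t : p_t ≤ p} g_t(v̄_t) ≤ (1/π)·p·Δ. -/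
/-- A CR-Pursuit(π) trajectory for the first T revenue functions. -/
def CRTraj (Δ : ℝ) (g : ℕ → ℝ → ℝ) (T : ℕ) (pi : ℝ) (v : ℕ → ℝ) : Prop :=
  ∀ t < T, v t ∈ Set.Icc 0 Δ ∧ pi * g t (v t) = eta Δ g (t+1) - eta Δ g t

/-! The offline optimum is submodular as a function of the set of slots it may use: for
`B ⊆ A` and a slot `t ∉ A`, the gain of adding `t` to `A` is at most the gain of adding it to `B`.
Hence the increments `η(g₁,…,g_t) - η(g₁,…,g_{t-1}) = π g_t(v̄_t)` over the slots `S` with `p_t ≤ p`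
add up to at most the offline optimum over `S` alone, which is at most `p Δ` because every
`g_t` with `t ∈ S` lies below its tangent `x ↦ p_t x ≤ p x` at `0`.
Submodularity follows from an exchange argument: an allocation `u` of `insert t A` and an
allocation `w` of `B` are turned into allocations of `A` and of `insert t B` by moving the part
of the excess `(w_s - u_s)⁺`, `s ∈ B`, that the budgets require from `w` to `u`; by concavity this
does not decrease the total revenue. -/

open Finset Set

lemma ConcaveOn.le_add_deriv_mul_sub {S : Set ℝ} {f : ℝ → ℝ} {a x : ℝ}
    (hf : ConcaveOn ℝ S f) (ha : a ∈ S) (hx : x ∈ S) (hax : a ≤ x)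
    (hfa : DifferentiableAt ℝ f a) : f x ≤ f a + deriv f a * (x - a) := by
  rcases hax.eq_or_lt with rfl | hlt
  · simp
  · have hslope := hf.slope_le_deriv ha hx hlt hfa
    rw [slope_def_field, div_le_iff₀ (sub_pos.mpr hlt)] at hslope
    linarith

lemma Admissible.le_mul {Δ m M c : ℝ} {f : ℝ → ℝ} (hf : Admissible Δ m M f)
    (hc : deriv f 0 ≤ c) {x : ℝ} (hx : x ∈ Icc 0 Δ) : f x ≤ c * x := by
  obtain ⟨hconc, -, hdiff, hf0, -⟩ := hf
  have h0 : (0 : ℝ) ∈ Icc 0 Δ := ⟨le_rfl, hx.1.trans hx.2⟩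
  have := hconc.le_add_deriv_mul_sub h0 hx hx.1 (hdiff 0 h0)
  rw [hf0, sub_zero, zero_add] at this
  exact this.trans (mul_le_mul_of_nonneg_right hc hx.1)

/-- Moving the fraction `θ` of the excess `(w - u)⁺` from `w` to `u` keeps `u + w` and
brings the two points together, so a concave function gains. -/
lemma ConcaveOn.add_le_add_shift {S : Set ℝ} {f : ℝ → ℝ} (hf : ConcaveOn ℝ S f)
    {u w θ : ℝ} (hu : u ∈ S) (hw : w ∈ S) (hθ₀ : 0 ≤ θ) (hθ₁ : θ ≤ 1) :
    f u + f w ≤ f (u + θ * max (w - u) 0) + f (w - θ * max (w - u) 0) := by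
  rcases le_total w u with hwu | huw
  · simp [max_eq_right (sub_nonpos.mpr hwu)]
  · rw [max_eq_left (sub_nonneg.mpr huw)]
    have h₁ := hf.2 hu hw (sub_nonneg.mpr hθ₁) hθ₀ (sub_add_cancel 1 θ)
    have h₂ := hf.2 hu hw hθ₀ (sub_nonneg.mpr hθ₁) (add_sub_cancel θ 1)
    simp only [smul_eq_mul] at h₁ h₂
    have e₁ : (1 - θ) * u + θ * w = u + θ * (w - u) := by ring
    have e₂ : θ * u + (1 - θ) * w = w - θ * (w - u) := by ring
    rw [e₁] at h₁
    rw [e₂] at h₂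
    linarith

lemma exists_mem_Icc_sub_mul_le_and_add_mul_le {X Y D c : ℝ} (hY : Y ≤ c)
    (hXD : X - D ≤ c) (hXY : X + Y ≤ 2 * c) :
    ∃ θ ∈ Icc (0 : ℝ) 1, X - θ * D ≤ c ∧ Y + θ * D ≤ c := by
  by_cases hX : X ≤ c
  · exact ⟨0, ⟨le_rfl, zero_le_one⟩, by simpa using hX, by simpa using hY⟩
  · have hD : 0 < D := by linarith
    have hθD : (X - c) / D * D = X - c := div_mul_cancel₀ _ hD.ne'
    refine ⟨(X - c) / D, ⟨by apply div_nonneg <;> linarith, ?_⟩, ?_, ?_⟩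
    · rw [div_le_one hD]; linarith
    · linarith
    · linarith

lemma csSup_add_csSup_le_csSup_add_csSup {S T S' T' : Set ℝ} (hS : S.Nonempty)
    (hT : T.Nonempty) (hS' : BddAbove S') (hT' : BddAbove T')
    (h : ∀ r ∈ S, ∀ q ∈ T, ∃ r' ∈ S', ∃ q' ∈ T', r + q ≤ r' + q') :
    sSup S + sSup T ≤ sSup S' + sSup T' := by
  rw [← le_sub_iff_add_le]
  refine csSup_le hS fun r hr => ?_
  rw [le_sub_iff_add_le, add_comm, ← le_sub_iff_add_le]
  refine csSup_le hT fun q hq => ?_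
  obtain ⟨r', hr', q', hq', hle⟩ := h r hr q hq
  have := le_csSup hS' hr'
  have := le_csSup hT' hq'
  linarith

section OfflineOptimum

variable {Δ : ℝ} {g : ℕ → ℝ → ℝ} {A B : Finset ℕ}

def revenueSet (Δ : ℝ) (g : ℕ → ℝ → ℝ) (A : Finset ℕ) : Set ℝ :=
  { r | ∃ v : ℕ → ℝ, (∀ t ∈ A, 0 ≤ v t) ∧ ∑ t ∈ A, v t ≤ Δ ∧ r = ∑ t ∈ A, g t (v t) }

noncomputable def offlineOpt (Δ : ℝ) (g : ℕ → ℝ → ℝ) (A : Finset ℕ) : ℝ :=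
  sSup (revenueSet Δ g A)

lemma eta_eq_offlineOpt (n : ℕ) : eta Δ g n = offlineOpt Δ g (range n) := by
  simp only [eta, offlineOpt, revenueSet, Finset.mem_range]

lemma mem_Icc_of_sum_le {v : ℕ → ℝ} (hv : ∀ t ∈ A, 0 ≤ v t) (hvΔ : ∑ t ∈ A, v t ≤ Δ)
    {t : ℕ} (ht : t ∈ A) : v t ∈ Icc 0 Δ :=
  ⟨hv t ht, (single_le_sum hv ht).trans hvΔ⟩

lemma revenueSet_nonempty (hΔ : 0 ≤ Δ) : (revenueSet Δ g A).Nonempty :=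
  ⟨_, fun _ => 0, fun _ _ => le_rfl, by simpa using hΔ, rfl⟩

lemma le_mul_of_mem_revenueSet {c r : ℝ} (hc : 0 ≤ c)
    (hg : ∀ t ∈ A, ∀ x ∈ Icc 0 Δ, g t x ≤ c * x) (hr : r ∈ revenueSet Δ g A) :
    r ≤ c * Δ := by
  obtain ⟨v, hv, hvΔ, rfl⟩ := hr
  calc ∑ t ∈ A, g t (v t) ≤ ∑ t ∈ A, c * v t :=
        sum_le_sum fun t ht => hg t ht _ (mem_Icc_of_sum_le hv hvΔ ht)
    _ = c * ∑ t ∈ A, v t := (mul_sum _ _ _).symm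
    _ ≤ c * Δ := mul_le_mul_of_nonneg_left hvΔ hc

lemma bddAbove_revenueSet {c : ℝ} (hc : 0 ≤ c) (hg : ∀ t ∈ A, ∀ x ∈ Icc 0 Δ, g t x ≤ c * x) :
    BddAbove (revenueSet Δ g A) :=
  ⟨c * Δ, fun _ => le_mul_of_mem_revenueSet hc hg⟩

lemma offlineOpt_le_mul {c : ℝ} (hΔ : 0 ≤ Δ) (hc : 0 ≤ c)
    (hg : ∀ t ∈ A, ∀ x ∈ Icc 0 Δ, g t x ≤ c * x) : offlineOpt Δ g A ≤ c * Δ :=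
  csSup_le (revenueSet_nonempty hΔ) fun _ => le_mul_of_mem_revenueSet hc hg

lemma offlineOpt_empty (hΔ : 0 ≤ Δ) : offlineOpt Δ g ∅ = 0 := by
  have : revenueSet Δ g ∅ = {0} := by
    ext r
    simp only [revenueSet, sum_empty, Set.mem_ofPred_eq, mem_singleton_iff]
    exact ⟨fun ⟨_, _, _, hr⟩ => hr, fun hr => ⟨0, by simp, hΔ, hr⟩⟩
  rw [offlineOpt, this, csSup_singleton]

lemma exists_exchange {t : ℕ} (hBA : B ⊆ A) (htA : t ∉ A)
    (hconc : ∀ s ∈ B, ConcaveOn ℝ (Icc 0 Δ) (g s)) :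
    ∀ r ∈ revenueSet Δ g (insert t A), ∀ q ∈ revenueSet Δ g B,
      ∃ r' ∈ revenueSet Δ g A, ∃ q' ∈ revenueSet Δ g (insert t B), r + q ≤ r' + q' := by
  rintro _ ⟨u, hu, huΔ, rfl⟩ _ ⟨w, hw, hwΔ, rfl⟩
  have htB : t ∉ B := fun h => htA (hBA h)
  set δ : ℕ → ℝ := fun s => if s ∈ B then max (w s - u s) 0 else 0 with hδ
  have hδB : ∀ s ∈ B, δ s = max (w s - u s) 0 := fun s hs => if_pos hs
  have hδA : ∑ s ∈ A, δ s = ∑ s ∈ B, δ s :=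
    (sum_subset hBA fun s _ hs => if_neg hs).symm
  have huA : ∀ s ∈ A, 0 ≤ u s := fun s hs => hu s (mem_insert_of_mem hs)
  have hut : 0 ≤ u t := hu t (mem_insert_self t A)
  rw [sum_insert htA] at huΔ ⊢
  have hmin : ∑ s ∈ B, w s - ∑ s ∈ B, δ s ≤ ∑ s ∈ A, u s := by
    rw [← sum_sub_distrib]
    calc ∑ s ∈ B, (w s - δ s) ≤ ∑ s ∈ B, u s :=
          sum_le_sum fun s hs => by rw [hδB s hs]; linarith [le_max_left (w s - u s) 0]
      _ ≤ ∑ s ∈ A, u s := sum_le_sum_of_subset_of_nonneg hBA fun s hs _ => huA s hs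
  obtain ⟨θ, ⟨hθ₀, hθ₁⟩, hbΔ, haΔ⟩ :=
    exists_mem_Icc_sub_mul_le_and_add_mul_le (X := u t + ∑ s ∈ B, w s) (Y := ∑ s ∈ A, u s)
      (D := ∑ s ∈ B, δ s) (c := Δ) (by linarith) (by linarith) (by linarith)
  set a : ℕ → ℝ := fun s => u s + θ * δ s
  set b : ℕ → ℝ := Function.update (fun s => w s - θ * δ s) t (u t)
  have hbB : ∀ s ∈ B, b s = w s - θ * δ s := fun s hs =>
    Function.update_of_ne (by rintro rfl; exact htB hs) _ _
  have hbt : b t = u t := Function.update_self _ _ _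
  have hδ₀ : ∀ s, 0 ≤ δ s := fun s => by
    simp only [hδ]; split_ifs <;> simp
  refine ⟨_, ⟨a, fun s hs => add_nonneg (huA s hs) (mul_nonneg hθ₀ (hδ₀ s)), ?_, rfl⟩,
    _, ⟨b, ?_, ?_, rfl⟩, ?_⟩
  · simp only [a, sum_add_distrib, ← mul_sum, hδA]
    exact haΔ
  · intro s hs
    rcases mem_insert.mp hs with rfl | hs
    · rw [hbt]; exact hut
    · rw [hbB s hs, hδB s hs, sub_nonneg]
      have hmax : max (w s - u s) 0 ≤ w s := max_le (by linarith [huA s (hBA hs)]) (hw s hs)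
      exact (mul_le_of_le_one_left (le_max_right _ _) hθ₁).trans hmax
  · rw [sum_insert htB, hbt, sum_congr rfl hbB, sum_sub_distrib, ← mul_sum]
    linarith
  · have hgain : ∑ s ∈ A, (g s (a s) - g s (u s)) = ∑ s ∈ B, (g s (a s) - g s (u s)) :=
      (sum_subset hBA fun s _ hs => by simp [a, hδ, hs]).symm
    have hpoint : ∑ s ∈ B, (g s (u s) + g s (w s)) ≤ ∑ s ∈ B, (g s (a s) + g s (b s)) :=
      sum_le_sum fun s hs => by
        rw [hbB s hs]
        simp only [a, hδB s hs]
        exact (hconc s hs).add_le_add_shift (mem_Icc_of_sum_le huA (by linarith) (hBA hs))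
          (mem_Icc_of_sum_le hw hwΔ hs) hθ₀ hθ₁
    rw [sum_sub_distrib, sum_sub_distrib] at hgain
    rw [sum_add_distrib, sum_add_distrib] at hpoint
    rw [sum_insert htB, hbt]
    linarith

lemma offlineOpt_insert_add_le {t : ℕ} (hΔ : 0 ≤ Δ) (hBA : B ⊆ A) (htA : t ∉ A)
    (hconc : ∀ s ∈ B, ConcaveOn ℝ (Icc 0 Δ) (g s)) (hA : BddAbove (revenueSet Δ g A))
    (htB : BddAbove (revenueSet Δ g (insert t B))) :
    offlineOpt Δ g (insert t A) + offlineOpt Δ g B ≤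
      offlineOpt Δ g A + offlineOpt Δ g (insert t B) :=
  csSup_add_csSup_le_csSup_add_csSup (revenueSet_nonempty hΔ) (revenueSet_nonempty hΔ) hA htB
    (exists_exchange hBA htA hconc)

lemma sum_filter_eta_sub_le_offlineOpt {c : ℝ} (hΔ : 0 ≤ Δ) (hc : 0 ≤ c) {n : ℕ}
    (hconc : ∀ t < n, ConcaveOn ℝ (Icc 0 Δ) (g t))
    (hg : ∀ t < n, ∀ x ∈ Icc 0 Δ, g t x ≤ c * x) (P : ℕ → Prop) [DecidablePred P] :
    ∑ t ∈ (range n).filter P, (eta Δ g (t + 1) - eta Δ g t) ≤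
      offlineOpt Δ g ((range n).filter P) := by
  induction n with
  | zero => simp [offlineOpt_empty hΔ]
  | succ n ih =>
    have ih := ih (fun t ht => hconc t (ht.trans n.lt_succ_self))
      (fun t ht => hg t (ht.trans n.lt_succ_self))
    rw [range_add_one, filter_insert]
    split_ifs with hPn
    · have hbdd : ∀ B ⊆ range (n + 1), BddAbove (revenueSet Δ g B) := fun B hB =>
        bddAbove_revenueSet hc fun t ht => hg t (Finset.mem_range.mp (hB ht))
      have hsub := offlineOpt_insert_add_le (t := n) hΔ (filter_subset P (range n))
        notMem_range_self
        (fun t ht => hconc t ((Finset.mem_range.mp (mem_filter.mp ht).1).trans n.lt_succ_self))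
        (hbdd _ (range_subset_range.mpr n.le_succ))
        (hbdd _ (by rw [range_add_one]; exact insert_subset_insert n (filter_subset P _)))
      rw [sum_insert (by simp), eta_eq_offlineOpt, eta_eq_offlineOpt, range_add_one]
      linarith
    · exact ih

end OfflineOptimum

theorem stmt8_general (Δ m M : ℝ) (hΔ : 0 < Δ) (hm : 0 < m)
    (T : ℕ) (g : ℕ → ℝ → ℝ) (hg : ∀ t < T, Admissible Δ m M (g t))
    (pi : ℝ) (hpi : 1 ≤ pi)
    (vb : ℕ → ℝ) (htraj : CRTraj Δ g T pi vb)
    (p : ℝ) (hp : p ∈ Set.Icc m M) :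
    ∑ t ∈ (Finset.range T).filter (fun t => deriv (g t) 0 ≤ p), g t (vb t) ≤
      (1 / pi) * p * Δ := by
  set S := (range T).filter (fun t => deriv (g t) 0 ≤ p)
  have hp₀ : 0 ≤ p := hm.le.trans hp.1
  have hstep : ∀ t ∈ S, g t (vb t) = 1 / pi * (eta Δ g (t + 1) - eta Δ g t) := fun t ht => by
    rw [← (htraj t (Finset.mem_range.mp (mem_filter.mp ht).1)).2]
    field_simp
  have hcheap : ∀ t ∈ S, ∀ x ∈ Icc 0 Δ, g t x ≤ p * x := fun t ht _ hx =>
    (hg t (Finset.mem_range.mp (mem_filter.mp ht).1)).le_mul (mem_filter.mp ht).2 hx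
  rw [sum_congr rfl hstep, ← mul_sum, mul_assoc]
  gcongr
  calc _ ≤ offlineOpt Δ g S :=
        sum_filter_eta_sub_le_offlineOpt hΔ.le (hp₀.trans hp.2)
          (fun t ht => (hg t ht).1) (fun t ht _ hx => (hg t ht).le_mul (hg t ht).2.2.2.2.2 hx) _
    _ ≤ p * Δ := offlineOpt_le_mul hΔ.le hp₀ hcheap

/-- Threshold bound: the online revenue of CR-Pursuit(π) collected in slots with
base price at most p is at most p·Δ/π (Lemma 6 of the paper). -/
theorem stmt8 (Δ m M : ℝ) (hΔ : 0 < Δ) (hm : 0 < m) (hmM : m ≤ M)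
    (T : ℕ) (g : ℕ → ℝ → ℝ) (hg : ∀ t < T, Admissible Δ m M (g t))
    (pi : ℝ) (hpi : 1 ≤ pi)
    (vb : ℕ → ℝ) (htraj : CRTraj Δ g T pi vb)
    (p : ℝ) (hp : p ∈ Set.Icc m M) :
    ∑ t ∈ (Finset.range T).filter (fun t => deriv (g t) 0 ≤ p), g t (vb t) ≤
      (1 / pi) * p * Δ :=
  stmt8_general Δ m M hΔ hm T g hg pi hpi vb htraj p hp
end

section
/- Let n ≥ 1 and let 0 < p_1 ≤ p_2 ≤ … ≤ p_n be reals, with the convention p_0 = 0. For any nonnegative reals y_1,…,y_n satisfying the nested constraints ∑_{j=1}^i y_j ≤ p_i for every i ∈ {1,…,n}, one has ∑_{i=1}^n y_i/p_i ≤ ∑_{i=1}^n (p_i − p_{i−1})/p_i; moreover this bound is attained by y_i = p_i − p_{i−1}. -/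
/-!
Write `S i = ∑_{j ≤ i} y j`, so `y i = S i - S (i-1)` and `p i - p (i-1)` are the increments of
the two sequences `S ≤ p`. By Abel summation, `∑ (c i - c (i-1)) * w i` is at least `c n * w n`
whenever `c 0 = 0`, `c ≥ 0` and the weights `w` are nonincreasing, so with `c = p - S` and
`w = 1/p` the increments of `p` carry at least as much weight as those of `S`.
-/

open Finset

theorem sum_Icc_one_sub_pred (f : ℕ → ℝ) (n : ℕ) :
    ∑ i ∈ Icc 1 n, (f i - f (i - 1)) = f n - f 0 := by
  induction n with
  | zero => simp
  | succ n ih =>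
    rw [sum_Icc_succ_top (by omega), ih, Nat.add_sub_cancel]
    ring

theorem sum_Icc_one_sub_sum_Icc_one_pred (y : ℕ → ℝ) {i : ℕ} (hi : 1 ≤ i) :
    ∑ j ∈ Icc 1 i, y j - ∑ j ∈ Icc 1 (i - 1), y j = y i := by
  obtain ⟨k, rfl⟩ := Nat.exists_eq_add_of_le' hi
  rw [sum_Icc_succ_top (by omega), Nat.add_sub_cancel]
  ring

theorem mul_le_sum_Icc_sub_mul {c w : ℕ → ℝ} {n : ℕ} (hc0 : c 0 = 0)
    (hc : ∀ i, 1 ≤ i → i < n → 0 ≤ c i) (hw : ∀ i, 1 ≤ i → i < n → w (i + 1) ≤ w i) :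
    c n * w n ≤ ∑ i ∈ Icc 1 n, (c i - c (i - 1)) * w i := by
  induction n with
  | zero => simp [hc0]
  | succ n ih =>
    have ih := ih (fun i h1 h2 => hc i h1 (by omega)) (fun i h1 h2 => hw i h1 (by omega))
    have hstep : 0 ≤ c n * (w n - w (n + 1)) := by
      rcases Nat.eq_zero_or_pos n with rfl | hn
      · simp [hc0]
      · exact mul_nonneg (hc n hn (by omega)) (sub_nonneg.2 (hw n hn (by omega)))
    rw [sum_Icc_succ_top (by omega), Nat.add_sub_cancel]
    linarith

theorem sum_Icc_sub_mul_le_of_le {a b w : ℕ → ℝ} {n : ℕ} (h0 : a 0 = b 0)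
    (hab : ∀ i, 1 ≤ i → i ≤ n → a i ≤ b i) (hw : ∀ i, 1 ≤ i → i < n → w (i + 1) ≤ w i)
    (hw_nonneg : ∀ i, 1 ≤ i → i ≤ n → 0 ≤ w i) :
    ∑ i ∈ Icc 1 n, (a i - a (i - 1)) * w i ≤ ∑ i ∈ Icc 1 n, (b i - b (i - 1)) * w i := by
  have hgap := mul_le_sum_Icc_sub_mul (c := b - a) (by simp [h0])
    (fun i h1 h2 => sub_nonneg.2 (hab i h1 h2.le)) hw
  have hgap_nonneg : 0 ≤ (b - a) n * w n := by
    rcases Nat.eq_zero_or_pos n with rfl | hn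
    · simp [h0]
    · exact mul_nonneg (sub_nonneg.2 (hab n hn le_rfl)) (hw_nonneg n hn le_rfl)
  rw [← sub_nonneg, ← sum_sub_distrib]
  calc 0 ≤ ∑ i ∈ Icc 1 n, ((b - a) i - (b - a) (i - 1)) * w i := hgap_nonneg.trans hgap
    _ = _ := sum_congr rfl fun i _ => by simp only [Pi.sub_apply]; ring

theorem stmt10_general (n : ℕ) (p : ℕ → ℝ) (hp0 : p 0 = 0)
    (hppos : ∀ i, 1 ≤ i → i ≤ n → 0 < p i)
    (hpmono : ∀ i, 1 ≤ i → i < n → p i ≤ p (i+1))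
    (y : ℕ → ℝ)
    (hcon : ∀ i, 1 ≤ i → i ≤ n → ∑ j ∈ Finset.Icc 1 i, y j ≤ p i) :
    (∑ i ∈ Finset.Icc 1 n, y i / p i ≤
      ∑ i ∈ Finset.Icc 1 n, (p i - p (i-1)) / p i) ∧
    (∀ i, 1 ≤ i → i ≤ n → 0 ≤ p i - p (i-1)) ∧
    (∀ i, 1 ≤ i → i ≤ n → ∑ j ∈ Finset.Icc 1 i, (p j - p (j-1)) ≤ p i) := by
  refine ⟨?_, ?_, fun i _ _ => by rw [sum_Icc_one_sub_pred, hp0, sub_zero]⟩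
  · have key := sum_Icc_sub_mul_le_of_le (a := fun i => ∑ j ∈ Icc 1 i, y j) (w := fun i => (p i)⁻¹)
      (by simp [hp0]) hcon (fun i h1 h2 => inv_anti₀ (hppos i h1 h2.le) (hpmono i h1 h2))
      (fun i h1 h2 => (inv_pos.2 (hppos i h1 h2)).le)
    simp only [div_eq_mul_inv]
    convert key using 2 with i hi
    rw [sum_Icc_one_sub_sum_Icc_one_pred y (mem_Icc.1 hi).1]
  · intro i h1 h2
    obtain ⟨k, rfl⟩ := Nat.exists_eq_add_of_le' h1
    rw [Nat.add_sub_cancel, sub_nonneg]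
    rcases Nat.eq_zero_or_pos k with rfl | hk
    · exact hp0 ▸ (hppos 1 le_rfl h2).le
    · exact hpmono k hk (by omega)

/-- The optimization over nested constraints: the weighted sum is maximized by
the increments y i = p i - p (i-1), which satisfy the constraints. -/
theorem stmt10 (n : ℕ) (hn : 1 ≤ n) (p : ℕ → ℝ) (hp0 : p 0 = 0)
    (hppos : ∀ i, 1 ≤ i → i ≤ n → 0 < p i)
    (hpmono : ∀ i, 1 ≤ i → i < n → p i ≤ p (i+1))
    (y : ℕ → ℝ) (hy : ∀ i, 1 ≤ i → i ≤ n → 0 ≤ y i)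
    (hcon : ∀ i, 1 ≤ i → i ≤ n → ∑ j ∈ Finset.Icc 1 i, y j ≤ p i) :
    (∑ i ∈ Finset.Icc 1 n, y i / p i ≤
      ∑ i ∈ Finset.Icc 1 n, (p i - p (i-1)) / p i) ∧
    (∀ i, 1 ≤ i → i ≤ n → 0 ≤ p i - p (i-1)) ∧
    (∀ i, 1 ≤ i → i ≤ n → ∑ j ∈ Finset.Icc 1 i, (p j - p (j-1)) ≤ p i) :=
  stmt10_general n p hp0 hppos hpmono y hcon
end

section
/- Let n ≥ 1 and let 0 < p_1 ≤ p_2 ≤ … ≤ p_n be reals, with the convention p_0 = 0. Then ∑_{i=1}^n (p_i − p_{i−1})/p_i ≤ 1 + ln(p_n/p_1). -/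
/-!
Each term satisfies `(p i - p (i-1)) / p i = 1 - (p i / p (i-1))⁻¹ ≤ log (p i / p (i-1))`, so
the terms with `i ≥ 2` telescope to at most `log (p n / p 1)`, while the term `i = 1` equals `1`
because `p 0 = 0`.
-/

open Finset Real

lemma sub_div_le_log_div {a b : ℝ} (ha : 0 < a) (hb : 0 < b) : (b - a) / b ≤ log (b / a) := by
  calc (b - a) / b = 1 - (b / a)⁻¹ := by field_simp
    _ ≤ log (b / a) := one_sub_inv_le_log_of_pos (div_pos hb ha)

lemma sum_Ioc_sub_div_le_log_div {p : ℕ → ℝ} {m n : ℕ} (hmn : m ≤ n)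
    (hp : ∀ i ∈ Icc m n, 0 < p i) :
    ∑ i ∈ Ioc m n, (p i - p (i - 1)) / p i ≤ log (p n / p m) := by
  induction n, hmn using Nat.le_induction with
  | base => simp
  | succ n hmn ih =>
    have hpm := hp m (by simp; omega)
    have hpn := hp n (by simp; omega)
    have hpn' := hp (n + 1) (by simp; omega)
    calc ∑ i ∈ Ioc m (n + 1), (p i - p (i - 1)) / p i
        = ∑ i ∈ Ioc m n, (p i - p (i - 1)) / p i + (p (n + 1) - p n) / p (n + 1) := by
          rw [sum_Ioc_succ_top (by omega), Nat.add_sub_cancel]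
      _ ≤ log (p n / p m) + log (p (n + 1) / p n) := by
          gcongr
          · exact ih fun i hi => hp i (by simp at hi ⊢; omega)
          · exact sub_div_le_log_div hpn hpn'
      _ = log (p (n + 1) / p m) := by
          rw [log_div hpn.ne' hpm.ne', log_div hpn'.ne' hpn.ne', log_div hpn'.ne' hpm.ne']
          ring

theorem stmt11_general (n : ℕ) (p : ℕ → ℝ) (hp0 : p 0 = 0)
    (hppos : ∀ i, 1 ≤ i → i ≤ n → 0 < p i) :
    ∑ i ∈ Finset.Icc 1 n, (p i - p (i-1)) / p i ≤ 1 + Real.log (p n / p 1) := by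
  rcases Nat.eq_zero_or_pos n with rfl | hn
  · simp [hp0]
  have hp1 : p 1 ≠ 0 := (hppos 1 le_rfl hn).ne'
  rw [← Ioc_insert_left hn, sum_insert left_notMem_Ioc, Nat.sub_self, hp0, sub_zero,
    div_self hp1]
  gcongr
  exact sum_Ioc_sub_div_le_log_div hn fun i hi => hppos i (mem_Icc.1 hi).1 (mem_Icc.1 hi).2

/-- The telescoping-ratio sum is bounded by 1 + ln(pₙ/p₁). -/
theorem stmt11 (n : ℕ) (hn : 1 ≤ n) (p : ℕ → ℝ) (hp0 : p 0 = 0)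
    (hppos : ∀ i, 1 ≤ i → i ≤ n → 0 < p i)
    (hpmono : ∀ i, 1 ≤ i → i < n → p i ≤ p (i+1)) :
    ∑ i ∈ Finset.Icc 1 n, (p i - p (i-1)) / p i ≤ 1 + Real.log (p n / p 1) :=
  stmt11_general n p hp0 hppos
end

section
/- Let g_1,…,g_T be admissible revenue functions with base prices p_t = g_t'(0) ∈ [m,M], let π ≥ 1, and let v̄_1,…,v̄_T be a CR-Pursuit(π) trajectory such that v̄_t ≤ v̂_t for every t, where v̂_t ∈ (0,Δ] is a maximizer of g_t over [0,Δ] with g_t(v̂_t) > 0. Let c ≥ 1 be a constant such that p_t·v̂_t ≤ c·g_t(v̂_t) for all t. Then ∑_{t=1}^T v̄_t ≤ (c·Δ/π)·(ln(M/m)+1). In particular, taking π = c·(ln(M/m)+1), every such CR-Pursuit(π) trajectory satisfies ∑_{t=1}^T v̄_t ≤ Δ, so CR-Pursuit(c·(ln θ + 1)) is feasible and hence c·(ln θ + 1)-competitive. -/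
/-!
Write `K t = η_{t+1} - η_t` for the increments of the offline optimum and `p t = g_t'(0)`.
Concavity propagates `p·v̂ ≤ c·g(v̂)` down to `v̄ ≤ v̂`, so a CR-Pursuit step uses at most
`(c/π)·K t/p t` inventory, and it remains to show `∑ K t/p t ≤ Δ(ln θ + 1)`.

Reading the first argument of `eta` as a variable inventory `x`, the value function
`x ↦ eta x g n` is concave, which makes `eta` supermodular in `(x, n)`. Induction on `n` then gives
the weak-duality bound `eta x g n ≤ λx + ∑_{t<n, λ ≤ p t} K t` for every price `λ ≥ 0`: a step with
`p t < λ` is paid for at price `λ`, because `g_t u ≤ p t·u`. At `x = Δ` this says the increments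
priced below `λ` total at most `λΔ`, and integrating `1/p = 1/M + ∫_m^M 1[p < λ] dλ/λ²` over `λ`
turns it into `∑ K t/p t ≤ η_T/M + Δ ln(M/m) ≤ Δ(ln θ + 1)`.
-/

open Set MeasureTheory intervalIntegral

lemma mul_sSup_add_mul_sSup_le {A B : Set ℝ} (hA : A.Nonempty) (hB : B.Nonempty) {a b c : ℝ}
    (ha : 0 ≤ a) (hb : 0 ≤ b) (h : ∀ x ∈ A, ∀ y ∈ B, a * x + b * y ≤ c) :
    a * sSup A + b * sSup B ≤ c := by
  rw [← smul_eq_mul a, ← smul_eq_mul b, ← Real.sSup_smul_of_nonneg ha,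
    ← Real.sSup_smul_of_nonneg hb, ← le_sub_iff_add_le']
  refine csSup_le (hB.smul_set) ?_
  rintro _ ⟨y, hy, rfl⟩
  rw [le_sub_iff_add_le, ← le_sub_iff_add_le']
  refine csSup_le (hA.smul_set) ?_
  rintro _ ⟨x, hx, rfl⟩
  rw [le_sub_iff_add_le]
  exact h x hx y hy

lemma ConcaveOn.add_le_add_shift_s12 {s : Set ℝ} {f : ℝ → ℝ} (hf : ConcaveOn ℝ s f) {a b u : ℝ}
    (ha : a ∈ s) (hb : b ∈ s) (hu : 0 ≤ u) (hub : u ≤ b - a) :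
    f a + f b ≤ f (a + u) + f (b - u) := by
  rcases hub.eq_or_lt with hab | hab
  · rw [hab, add_sub_cancel, sub_sub_cancel, add_comm]
  · set t := u / (b - a)
    have hba : 0 < b - a := hu.trans_lt hab
    have ht0 : 0 ≤ t := div_nonneg hu hba.le
    have ht1 : t ≤ 1 := div_le_one_of_le₀ hab.le hba.le
    have htu : t * (b - a) = u := div_mul_cancel₀ u hba.ne'
    have h₁ := hf.2 ha hb (sub_nonneg.2 ht1) ht0 (sub_add_cancel 1 t)
    have h₂ := hf.2 ha hb ht0 (sub_nonneg.2 ht1) (add_sub_cancel t 1)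
    simp only [smul_eq_mul] at h₁ h₂
    rw [show (1 - t) * a + t * b = a + u by rw [← htu]; ring] at h₁
    rw [show t * a + (1 - t) * b = b - u by rw [← htu]; ring] at h₂
    linarith

lemma integral_inv_sq {a b : ℝ} (ha : 0 < a) (hb : 0 < b) :
    ∫ x in a..b, (x ^ 2)⁻¹ = a⁻¹ - b⁻¹ := by
  have h0 : (0 : ℝ) ∉ uIcc a b := fun h => by
    rcases h with ⟨h1, -⟩; exact (lt_min ha hb).not_ge h1
  have hderiv : ∀ x ∈ uIcc a b, HasDerivAt (fun x => -x⁻¹) ((x ^ 2)⁻¹) x := fun x hx => by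
    simpa using (hasDerivAt_inv (ne_of_mem_of_not_mem hx h0)).fun_neg
  have hcont : ContinuousOn (fun x : ℝ => (x ^ 2)⁻¹) (uIcc a b) :=
    (continuousOn_id.pow 2).inv₀ fun x hx => pow_ne_zero 2 (ne_of_mem_of_not_mem hx h0)
  rw [integral_eq_sub_of_hasDerivAt hderiv hcont.intervalIntegrable]
  ring

lemma integral_indicator_Ioi_inv_sq {m M p : ℝ} (hm : 0 < m) (hp : p ∈ Icc m M) :
    ∫ l in m..M, (Ioi p).indicator (fun l => (l ^ 2)⁻¹) l = p⁻¹ - M⁻¹ := by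
  have hp0 : 0 < p := hm.trans_le hp.1
  rw [integral_of_le (hp.1.trans hp.2), setIntegral_indicator measurableSet_Ioi, Ioc_inter_Ioi,
    max_eq_right hp.1, ← integral_of_le hp.2, integral_inv_sq hp0 (hp0.trans_le hp.2)]

lemma sum_div_le_of_sum_filter_lt_le {ι : Type*} (s : Finset ι) {K p : ι → ℝ} {m M Δ : ℝ}
    (hm : 0 < m) (hmM : m ≤ M) (hp : ∀ i ∈ s, p i ∈ Icc m M)
    (h : ∀ l ∈ Icc m M, ∑ i ∈ s with p i < l, K i ≤ l * Δ) :
    ∑ i ∈ s, K i / p i ≤ (∑ i ∈ s, K i) / M + Δ * Real.log (M / m) := by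
  set φ : ι → ℝ → ℝ := fun i => (Ioi (p i)).indicator fun l => (l ^ 2)⁻¹
  have hφ : ∀ i, IntervalIntegrable (φ i) volume m M := fun i => by
    have hcont : ContinuousOn (fun l : ℝ => (l ^ 2)⁻¹) (Icc m M) :=
      (continuousOn_id.pow 2).inv₀ fun l hl => pow_ne_zero 2 (hm.trans_le hl.1).ne'
    rw [intervalIntegrable_iff_integrableOn_Ioc_of_le hmM]
    exact ((hcont.integrableOn_Icc).mono_set Ioc_subset_Icc_self).indicator measurableSet_Ioi
  have hsplit : ∀ i ∈ s, K i / p i = K i / M + K i * ∫ l in m..M, φ i l := fun i hi => by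
    have hp0 : 0 < p i := hm.trans_le (hp i hi).1
    rw [integral_indicator_Ioi_inv_sq hm (hp i hi)]
    field_simp [(hp0.trans_le (hp i hi).2).ne']
    ring
  have hpoint : ∀ l ∈ Icc m M, ∑ i ∈ s, K i * φ i l ≤ Δ * l⁻¹ := fun l hl => by
    have hl0 : 0 < l := hm.trans_le hl.1
    calc ∑ i ∈ s, K i * φ i l = (∑ i ∈ s with p i < l, K i) * (l ^ 2)⁻¹ := by
          simp [φ, indicator_apply, Finset.sum_filter, Finset.sum_mul]
      _ ≤ l * Δ * (l ^ 2)⁻¹ := by gcongr; exact h l hl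
      _ = Δ * l⁻¹ := by field_simp
  calc ∑ i ∈ s, K i / p i = (∑ i ∈ s, K i) / M + ∫ l in m..M, ∑ i ∈ s, K i * φ i l := by
        rw [Finset.sum_congr rfl hsplit, Finset.sum_add_distrib, Finset.sum_div,
          integral_finsetSum fun i _ => (hφ i).const_mul (K i)]
        simp only [intervalIntegral.integral_const_mul]
    _ ≤ (∑ i ∈ s, K i) / M + ∫ l in m..M, Δ * l⁻¹ := by
        gcongr
        refine integral_mono_on hmM ?_ ?_ hpoint
        · simpa only [Finset.sum_fn] using
            IntervalIntegrable.sum s fun i _ => (hφ i).const_mul (K i)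
        · refine (intervalIntegrable_inv (fun l hl => ?_) continuousOn_id).const_mul Δ
          rw [uIcc_of_le hmM] at hl
          exact (hm.trans_le hl.1).ne'
    _ = (∑ i ∈ s, K i) / M + Δ * Real.log (M / m) := by
        rw [intervalIntegral.integral_const_mul, integral_inv_of_pos hm (hm.trans_le hmM)]

namespace Admissible

variable {Δ m M : ℝ} {g : ℝ → ℝ}

lemma apply_le_deriv_mul (hg : Admissible Δ m M g) {v : ℝ} (hv : v ∈ Icc 0 Δ) :
    g v ≤ deriv g 0 * v := by
  have h0 : (0 : ℝ) ∈ Icc 0 Δ := ⟨le_rfl, hv.1.trans hv.2⟩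
  rcases hv.1.eq_or_lt with rfl | hv0
  · simp [hg.2.2.2.1]
  · have := hg.1.slope_le_deriv h0 hv hv0 (hg.2.2.1 0 h0)
    rwa [slope_def_field, hg.2.2.2.1, sub_zero, sub_zero, div_le_iff₀ hv0] at this

lemma mul_apply_le_mul_apply (hg : Admissible Δ m M g) {a b : ℝ} (ha : 0 ≤ a) (hab : a ≤ b)
    (hb : b ≤ Δ) : a * g b ≤ b * g a := by
  rcases (ha.trans hab).eq_or_lt with rfl | hb0
  · simp [le_antisymm hab ha, hg.2.2.2.1]
  · have h0 : (0 : ℝ) ∈ Icc 0 Δ := ⟨le_rfl, hb0.le.trans hb⟩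
    have hconc := hg.1.2 h0 ⟨hb0.le, hb⟩ (sub_nonneg.2 ((div_le_one hb0).2 hab))
      (div_nonneg ha hb0.le) (sub_add_cancel 1 (a / b))
    simp only [smul_eq_mul, mul_zero, zero_add, hg.2.2.2.1, div_mul_cancel₀ a hb0.ne'] at hconc
    rw [div_mul_eq_mul_div, div_le_iff₀ hb0] at hconc
    linarith

lemma deriv_mul_le_of_le (hg : Admissible Δ m M g) {c v w : ℝ} (hc : 0 ≤ c) (hv : 0 ≤ v)
    (hvw : v ≤ w) (hw : w ∈ Ioc 0 Δ) (hcw : deriv g 0 * w ≤ c * g w) :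
    deriv g 0 * v ≤ c * g v := by
  have hchord := hg.mul_apply_le_mul_apply hv hvw hw.2
  refine le_of_mul_le_mul_right ?_ hw.1
  calc deriv g 0 * v * w = v * (deriv g 0 * w) := by ring
    _ ≤ v * (c * g w) := mul_le_mul_of_nonneg_left hcw hv
    _ = c * (v * g w) := by ring
    _ ≤ c * (w * g v) := mul_le_mul_of_nonneg_left hchord hc
    _ = c * g v * w := by ring

end Admissible

section OfflineOptimum

variable {g : ℕ → ℝ → ℝ} {n : ℕ} {Δ x : ℝ}

lemma apply_le_of_sum_range_le {v : ℕ → ℝ} (hv : ∀ t < n, 0 ≤ v t)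
    (hvx : ∑ t ∈ Finset.range n, v t ≤ x) {t : ℕ} (ht : t < n) : v t ≤ x :=
  (Finset.single_le_sum (fun s hs => hv s (Finset.mem_range.1 hs))
    (Finset.mem_range.2 ht)).trans hvx

lemma sum_le_eta (hg : ∀ t < n, MonotoneOn (g t) (Icc 0 Δ)) (hxΔ : x ≤ Δ) {v : ℕ → ℝ}
    (hv : ∀ t < n, 0 ≤ v t) (hvx : ∑ t ∈ Finset.range n, v t ≤ x) :
    ∑ t ∈ Finset.range n, g t (v t) ≤ eta x g n := by
  refine le_csSup ⟨∑ t ∈ Finset.range n, g t Δ, ?_⟩ ⟨v, hv, hvx, rfl⟩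
  rintro _ ⟨w, hw, hwx, rfl⟩
  refine Finset.sum_le_sum fun t ht => ?_
  have ht := Finset.mem_range.1 ht
  have hwΔ := (apply_le_of_sum_range_le hw hwx ht).trans hxΔ
  exact hg t ht ⟨hw t ht, hwΔ⟩ ⟨(hw t ht).trans hwΔ, le_rfl⟩ hwΔ

lemma eta_le (hx : 0 ≤ x) {C : ℝ}
    (h : ∀ v : ℕ → ℝ, (∀ t < n, 0 ≤ v t) → ∑ t ∈ Finset.range n, v t ≤ x →
      ∑ t ∈ Finset.range n, g t (v t) ≤ C) :
    eta x g n ≤ C := by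
  refine csSup_le ⟨_, 0, fun _ _ => le_rfl, by simpa using hx, rfl⟩ ?_
  rintro _ ⟨v, hv, hvx, rfl⟩
  exact h v hv hvx

lemma eta_zero (hx : 0 ≤ x) : eta x g 0 = 0 := by
  have := sum_le_eta (g := g) (n := 0) (fun t ht => (Nat.not_lt_zero t ht).elim) le_rfl
    (v := 0) (fun t ht => (Nat.not_lt_zero t ht).elim) (by simpa using hx)
  exact le_antisymm (eta_le hx fun _ _ _ => by simp) (by simpa using this)

lemma concaveOn_eta (hmono : ∀ t < n, MonotoneOn (g t) (Icc 0 Δ))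
    (hconc : ∀ t < n, ConcaveOn ℝ (Icc 0 Δ) (g t)) :
    ConcaveOn ℝ (Icc 0 Δ) fun x => eta x g n := by
  refine ⟨convex_Icc 0 Δ, fun x hx y hy a b ha hb hab => ?_⟩
  have hz := (convex_Icc 0 Δ) hx hy ha hb hab
  simp only [smul_eq_mul] at hz ⊢
  unfold eta
  refine mul_sSup_add_mul_sSup_le ?_ ?_ ha hb ?_
  · exact ⟨_, 0, fun _ _ => le_rfl, by simpa using hx.1, rfl⟩
  · exact ⟨_, 0, fun _ _ => le_rfl, by simpa using hy.1, rfl⟩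
  rintro _ ⟨v, hv, hvx, rfl⟩ _ ⟨w, hw, hwy, rfl⟩
  have hvΔ t (ht : t < n) : v t ∈ Icc 0 Δ :=
    ⟨hv t ht, (apply_le_of_sum_range_le hv hvx ht).trans hx.2⟩
  have hwΔ t (ht : t < n) : w t ∈ Icc 0 Δ :=
    ⟨hw t ht, (apply_le_of_sum_range_le hw hwy ht).trans hy.2⟩
  calc a * ∑ t ∈ Finset.range n, g t (v t) + b * ∑ t ∈ Finset.range n, g t (w t)
      ≤ ∑ t ∈ Finset.range n, g t (a * v t + b * w t) := by
        rw [Finset.mul_sum, Finset.mul_sum, ← Finset.sum_add_distrib]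
        refine Finset.sum_le_sum fun t ht => ?_
        have ht := Finset.mem_range.1 ht
        simpa only [smul_eq_mul] using (hconc t ht).2 (hvΔ t ht) (hwΔ t ht) ha hb hab
    _ ≤ eta (a * x + b * y) g n := by
        refine sum_le_eta hmono hz.2 (fun t ht => ?_) ?_
        · have := hv t ht; have := hw t ht; positivity
        · rw [Finset.sum_add_distrib, ← Finset.mul_sum, ← Finset.mul_sum]
          gcongr


lemma eta_add_apply_le_eta_succ (hmono : ∀ t < n + 1, MonotoneOn (g t) (Icc 0 Δ)) {y u : ℝ}
    (hy : 0 ≤ y) (hu : 0 ≤ u) (hyu : y + u ≤ Δ) :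
    eta y g n + g n u ≤ eta (y + u) g (n + 1) := by
  rw [← le_sub_iff_add_le]
  refine eta_le hy fun v hv hvy => ?_
  have hsum : ∀ f : ℕ → ℝ → ℝ, ∑ t ∈ Finset.range (n + 1), f t (Function.update v n u t)
      = ∑ t ∈ Finset.range n, f t (v t) + f n u := fun f => by
    rw [Finset.sum_range_succ, Function.update_self]
    congr 1
    refine Finset.sum_congr rfl fun t ht => ?_
    rw [Function.update_of_ne (Finset.mem_range.1 ht).ne]
  have hext := sum_le_eta hmono hyu (v := Function.update v n u) (fun t ht => ?_)
    (by simpa only [hsum fun _ x => x] using add_le_add_left hvy u)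
  · rw [hsum] at hext
    linarith
  · rcases (Nat.lt_succ_iff_lt_or_eq.1 ht) with ht | rfl
    · rw [Function.update_of_ne ht.ne]; exact hv t ht
    · rwa [Function.update_self]

lemma eta_succ_le (hmono : ∀ t < n, MonotoneOn (g t) (Icc 0 Δ)) (hx : 0 ≤ x) (hxΔ : x ≤ Δ)
    {C : ℝ} (h : ∀ u ∈ Icc 0 x, eta (x - u) g n + g n u ≤ C) :
    eta x g (n + 1) ≤ C := by
  refine eta_le hx fun v hv hvx => ?_
  rw [Finset.sum_range_succ] at hvx ⊢
  have hu : v n ∈ Icc 0 x := ⟨hv n n.lt_succ_self, apply_le_of_sum_range_le hv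
    (by rwa [Finset.sum_range_succ]) n.lt_succ_self⟩
  have hprefix := sum_le_eta hmono (by linarith [hu.1] : x - v n ≤ Δ)
    (fun t ht => hv t (ht.trans n.lt_succ_self)) (by linarith)
  linarith [h (v n) hu]

lemma eta_succ_add_eta_le (hmono : ∀ t < n + 1, MonotoneOn (g t) (Icc 0 Δ))
    (hconc : ∀ t < n, ConcaveOn ℝ (Icc 0 Δ) (g t)) (hx : x ∈ Icc 0 Δ) :
    eta x g (n + 1) + eta Δ g n ≤ eta x g n + eta Δ g (n + 1) := by
  have hmono' : ∀ t < n, MonotoneOn (g t) (Icc 0 Δ) := fun t ht => hmono t (ht.trans n.lt_succ_self)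
  rw [← le_sub_iff_add_le, add_sub_assoc]
  refine eta_succ_le hmono' hx.1 hx.2 fun u hu => ?_
  have hΔ : 0 ≤ Δ := hx.1.trans hx.2
  have hshift := (concaveOn_eta hmono' hconc).add_le_add_shift_s12 (a := x - u) (b := Δ) (u := u)
    ⟨by linarith [hu.2], by linarith [hu.1, hx.2]⟩ ⟨hΔ, le_rfl⟩ hu.1 (by linarith [hx.2])
  have hext := eta_add_apply_le_eta_succ hmono (y := Δ - u) (u := u)
    (by linarith [hu.2, hx.2]) hu.1 (by linarith)
  simp only [sub_add_cancel] at hshift hext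
  linarith

end OfflineOptimum

section Duality

variable {Δ m M : ℝ} {g : ℕ → ℝ → ℝ} {n : ℕ} {x : ℝ}

lemma eta_le_mul (hg : ∀ t < n, Admissible Δ m M (g t)) (hM : 0 ≤ M) (hx : x ∈ Icc 0 Δ) :
    eta x g n ≤ M * x := by
  refine eta_le hx.1 fun v hv hvx => ?_
  calc ∑ t ∈ Finset.range n, g t (v t) ≤ ∑ t ∈ Finset.range n, M * v t := by
        refine Finset.sum_le_sum fun t ht => ?_
        have ht := Finset.mem_range.1 ht
        calc g t (v t) ≤ deriv (g t) 0 * v t := (hg t ht).apply_le_deriv_mul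
              ⟨hv t ht, (apply_le_of_sum_range_le hv hvx ht).trans hx.2⟩
          _ ≤ M * v t := mul_le_mul_of_nonneg_right (hg t ht).2.2.2.2.2 (hv t ht)
    _ ≤ M * x := by rw [← Finset.mul_sum]; exact mul_le_mul_of_nonneg_left hvx hM

lemma eta_le_mul_add_sum_increments (hg : ∀ t < n, Admissible Δ m M (g t)) {l : ℝ} (hl : 0 ≤ l)
    (hx : x ∈ Icc 0 Δ) :
    eta x g n ≤ l * x +
      ∑ t ∈ Finset.range n with l ≤ deriv (g t) 0, (eta Δ g (t + 1) - eta Δ g t) := by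
  induction n generalizing x with
  | zero => simpa [eta_zero hx.1] using mul_nonneg hl hx.1
  | succ n ih =>
    have hg' : ∀ t < n, Admissible Δ m M (g t) := fun t ht => hg t (ht.trans n.lt_succ_self)
    rw [Finset.sum_filter, Finset.sum_range_succ, ← Finset.sum_filter]
    split_ifs with hp
    · have hsuper := eta_succ_add_eta_le (fun t ht => (hg t ht).2.1) (fun t ht => (hg' t ht).1) hx
      linarith [ih hg' hx]
    · refine eta_succ_le (fun t ht => (hg' t ht).2.1) hx.1 hx.2 fun u hu => ?_
      have hprev := ih hg' (x := x - u) ⟨by linarith [hu.2], by linarith [hu.1, hx.2]⟩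
      have hlin := (hg n n.lt_succ_self).apply_le_deriv_mul ⟨hu.1, hu.2.trans hx.2⟩
      have hpu : deriv (g n) 0 * u ≤ l * u := mul_le_mul_of_nonneg_right (not_le.1 hp).le hu.1
      linarith [mul_sub l x u]

lemma sum_increment_div_deriv_le (hm : 0 < m) (hmM : m ≤ M) (hΔ : 0 ≤ Δ)
    (hg : ∀ t < n, Admissible Δ m M (g t)) :
    ∑ t ∈ Finset.range n, (eta Δ g (t + 1) - eta Δ g t) / deriv (g t) 0 ≤
      Δ * (Real.log (M / m) + 1) := by
  have htotal : ∑ t ∈ Finset.range n, (eta Δ g (t + 1) - eta Δ g t) = eta Δ g n := by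
    rw [Finset.sum_range_sub (fun t => eta Δ g t), eta_zero hΔ, sub_zero]
  refine (sum_div_le_of_sum_filter_lt_le (Δ := Δ) _ hm hmM
    (fun t ht => (hg t (Finset.mem_range.1 ht)).2.2.2.2) fun l hl => ?_).trans ?_
  · have hdual := eta_le_mul_add_sum_increments hg (hm.le.trans hl.1) ⟨hΔ, le_rfl⟩
    have hsplit := Finset.sum_filter_add_sum_filter_not (Finset.range n)
      (fun t => l ≤ deriv (g t) 0) fun t => eta Δ g (t + 1) - eta Δ g t
    simp only [not_le] at hsplit
    linarith
  · have hM : 0 < M := hm.trans_le hmM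
    have hopt : eta Δ g n / M ≤ Δ :=
      div_le_of_le_mul₀ hM.le hΔ (by linarith [eta_le_mul hg hM.le ⟨hΔ, le_rfl⟩])
    rw [htotal]
    linarith

end Duality

/-- Theorem 5 of the paper: the total inventory used by CR-Pursuit(π) is at most
(cΔ/π)(ln θ + 1); in particular CR-Pursuit(c(ln θ + 1)) is feasible. -/
theorem stmt12 (Δ m M : ℝ) (hΔ : 0 < Δ) (hm : 0 < m) (hmM : m ≤ M)
    (pi : ℝ) (hpi : 1 ≤ pi) (T : ℕ) (g : ℕ → ℝ → ℝ)
    (hg : ∀ t < T, Admissible Δ m M (g t))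
    (vb : ℕ → ℝ) (htraj : CRTraj Δ g T pi vb)
    (vhat : ℕ → ℝ)
    (hvhat : ∀ t < T, vhat t ∈ Set.Ioc 0 Δ ∧ IsMaxOn (g t) (Set.Icc 0 Δ) (vhat t) ∧
      0 < g t (vhat t))
    (hle : ∀ t < T, vb t ≤ vhat t)
    (c : ℝ) (hc : 1 ≤ c)
    (hcb : ∀ t < T, deriv (g t) 0 * vhat t ≤ c * g t (vhat t)) :
    ∑ t ∈ Finset.range T, vb t ≤ (c * Δ / pi) * (Real.log (M / m) + 1) ∧
    (pi = c * (Real.log (M / m) + 1) → ∑ t ∈ Finset.range T, vb t ≤ Δ) := by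
  have hpi0 : 0 < pi := one_pos.trans_le hpi
  have hstep : ∀ t ∈ Finset.range T,
      vb t ≤ c / pi * ((eta Δ g (t + 1) - eta Δ g t) / deriv (g t) 0) := fun t ht => by
    have ht := Finset.mem_range.1 ht
    obtain ⟨hvb, hpursuit⟩ := htraj t ht
    have hp : 0 < deriv (g t) 0 := hm.trans_le (hg t ht).2.2.2.2.1
    have hprice := (hg t ht).deriv_mul_le_of_le (zero_le_one.trans hc) hvb.1 (hle t ht)
      (hvhat t ht).1 (hcb t ht)
    rw [← hpursuit, show c / pi * (pi * g t (vb t) / deriv (g t) 0)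
      = c * g t (vb t) / deriv (g t) 0 by field_simp, le_div_iff₀ hp]
    linarith
  have hbound : ∑ t ∈ Finset.range T, vb t ≤ (c * Δ / pi) * (Real.log (M / m) + 1) := by
    calc ∑ t ∈ Finset.range T, vb t
        ≤ c / pi * ∑ t ∈ Finset.range T, (eta Δ g (t + 1) - eta Δ g t) / deriv (g t) 0 := by
          rw [Finset.mul_sum]; exact Finset.sum_le_sum hstep
      _ ≤ c / pi * (Δ * (Real.log (M / m) + 1)) :=
          mul_le_mul_of_nonneg_left (sum_increment_div_deriv_le hm hmM hΔ.le hg)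
            (div_nonneg (zero_le_one.trans hc) hpi0.le)
      _ = (c * Δ / pi) * (Real.log (M / m) + 1) := by ring
  refine ⟨hbound, fun hpi_eq => hbound.trans_eq ?_⟩
  have hlog : 0 < Real.log (M / m) + 1 := by
    linarith [Real.log_nonneg ((one_le_div hm).2 hmM)]
  rw [hpi_eq]
  field_simp
end

section
/- Let 0 < m ≤ M, Δ > 0, T ≥ 1, and let p_1,…,p_T ∈ [m,M]. Set π = ln(M/m) + 1, M_t = max_{1≤τ≤t} p_τ for t ≥ 1, and M_0 = 0, and define v̄_t = Δ·(M_t − M_{t−1})/(π·p_t) for each t. Then ∑_{t=1}^T v̄_t ≤ Δ. (This is the feasibility of CR-Pursuit(ln θ + 1) for the classic one-way trading problem, showing it achieves the optimal competitive ratio ln θ + 1.) -/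
/-!
Write `Mₜ` for the running maximum and `xₜ = (Mₜ₊₁ - Mₜ) / pₜ`, so that `v̄ₜ = (Δ / π) xₜ`.
The first slot sells `x₀ = 1`. Afterwards `xₜ` is nonzero only when `pₜ = Mₜ₊₁` is a new maximum,
and then `xₜ = 1 - Mₜ / Mₜ₊₁ ≤ log Mₜ₊₁ - log Mₜ`. The sum of the `xₜ` therefore telescopes to at
most `1 + log (M_T / m) ≤ 1 + log (M / m) = π`.
-/

open Finset Real

lemma max_sub_div_le_log_max_sub_log {a p : ℝ} (ha : 0 < a) (hp : 0 < p) :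
    (max a p - a) / p ≤ log (max a p) - log a := by
  rcases le_total p a with hpa | hap
  · simp [max_eq_left hpa]
  · rw [max_eq_right hap, ← log_div hp.ne' ha.ne']
    calc (p - a) / p = 1 - (p / a)⁻¹ := by field_simp
      _ ≤ log (p / a) := one_sub_inv_le_log_of_pos (div_pos hp ha)

section RunningMax

variable {p Mf : ℕ → ℝ} {n : ℕ}

lemma runningMax_le {M : ℝ} (hM : 0 ≤ M) (hMf0 : Mf 0 = 0)
    (hMf : ∀ t < n, Mf (t + 1) = max (Mf t) (p t)) (hp : ∀ t < n, p t ≤ M) : Mf n ≤ M := by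
  induction n with
  | zero => rwa [hMf0]
  | succ k ih =>
    rw [hMf k k.lt_succ_self]
    exact max_le (ih (fun t ht => hMf t (by omega)) (fun t ht => hp t (by omega)))
      (hp k k.lt_succ_self)

lemma le_runningMax_succ {m : ℝ} {t : ℕ} (hMf : Mf (t + 1) = max (Mf t) (p t)) (hp : m ≤ p t) :
    m ≤ Mf (t + 1) :=
  hMf ▸ le_max_of_le_right hp

lemma sum_runningMax_increment_div_le {m : ℝ} (hm : 0 < m) (hMf0 : Mf 0 = 0)
    (hMf : ∀ t < n + 1, Mf (t + 1) = max (Mf t) (p t)) (hp : ∀ t < n + 1, m ≤ p t) :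
    ∑ t ∈ range (n + 1), (Mf (t + 1) - Mf t) / p t ≤ 1 + log (Mf (n + 1) / m) := by
  have hMf_ge : ∀ t < n + 1, m ≤ Mf (t + 1) := fun t ht => le_runningMax_succ (hMf t ht) (hp t ht)
  induction n with
  | zero =>
    have hp0 : 0 < p 0 := hm.trans_le (hp 0 one_pos)
    rw [sum_range_one, hMf 0 one_pos, hMf0, max_eq_right hp0.le, sub_zero, div_self hp0.ne']
    exact le_add_of_nonneg_right (log_nonneg ((one_le_div hm).2 (hp 0 one_pos)))
  | succ k ih =>
    have hMfk : 0 < Mf (k + 1) := hm.trans_le (hMf_ge k (by omega))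
    have hpk : 0 < p (k + 1) := hm.trans_le (hp (k + 1) (by omega))
    have hstep := max_sub_div_le_log_max_sub_log hMfk hpk
    rw [← hMf (k + 1) (by omega)] at hstep
    have hprev := ih (fun t ht => hMf t (by omega)) (fun t ht => hp t (by omega))
      (fun t ht => hMf_ge t (by omega))
    rw [sum_range_succ, log_div (hm.trans_le (hMf_ge (k + 1) (by omega))).ne' hm.ne']
    rw [log_div hMfk.ne' hm.ne'] at hprev
    linarith

end RunningMax

/-- Feasibility of CR-Pursuit(ln θ + 1) for the classic one-way trading problem:
the total quantity it sells never exceeds the inventory Δ. -/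
theorem stmt14 (m M Δ : ℝ) (hm : 0 < m) (hmM : m ≤ M) (hΔ : 0 < Δ)
    (T : ℕ) (hT : 1 ≤ T) (p : ℕ → ℝ) (hp : ∀ t < T, p t ∈ Set.Icc m M)
    (pi : ℝ) (hpiv : pi = Real.log (M / m) + 1)
    (Mf : ℕ → ℝ) (hMf0 : Mf 0 = 0)
    (hMf : ∀ t < T, Mf (t+1) = max (Mf t) (p t))
    (vb : ℕ → ℝ) (hvb : ∀ t < T, vb t = Δ * (Mf (t+1) - Mf t) / (pi * p t)) :
    ∑ t ∈ Finset.range T, vb t ≤ Δ := by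
  obtain ⟨n, rfl⟩ : ∃ n, T = n + 1 := ⟨T - 1, by omega⟩
  have hpi : 0 < pi := by
    rw [hpiv]
    linarith [log_nonneg ((one_le_div hm).2 hmM)]
  have hMfT : Mf (n + 1) ≤ M :=
    runningMax_le (hm.le.trans hmM) hMf0 hMf fun t ht => (hp t ht).2
  have hsum := sum_runningMax_increment_div_le hm hMf0 hMf fun t ht => (hp t ht).1
  have hlog : log (Mf (n + 1) / m) ≤ log (M / m) :=
    log_le_log (div_pos (hm.trans_le (le_runningMax_succ (hMf n n.lt_succ_self)
      (hp n n.lt_succ_self).1)) hm) (div_le_div_of_nonneg_right hMfT hm.le)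
  calc ∑ t ∈ range (n + 1), vb t
      = Δ / pi * ∑ t ∈ range (n + 1), (Mf (t + 1) - Mf t) / p t := by
        rw [mul_sum]
        refine sum_congr rfl fun t ht => ?_
        rw [hvb t (mem_range.1 ht)]
        ring
    _ ≤ Δ / pi * pi := by gcongr; linarith
    _ = Δ := div_mul_cancel₀ Δ hpi.ne'
end

section
/- Let Δ > 0, p > 0, and let f : ℝ → ℝ be convex on [0,Δ] with f(0) = 0 and f(v) ≥ 0 for all v ∈ [0,Δ]. Define g(v) = (p − f(v))·v, let v̂ ∈ [0,Δ] be a maximizer of g over [0,Δ], let π ≥ 1, and let v̄ ∈ [0, v̂] satisfy π·g(v̄) ≤ g(v̂). Then v̄·p·(1 + √(1 − 1/π)) ≤ 2·g(v̄); equivalently v̄ ≤ [2/(1 + √(1 − 1/π))]·g(v̄)/p. -/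
/-!
Write `v̄ = t v̂` with `t ∈ [0, 1]`. Convexity and `f 0 = 0` give `f (a x) ≤ a f x` for `a ∈ [0, 1]`,
so along the ray through `v̂` the revenue dominates the quadratic `(p - a f v̂) a v̂`; maximality of
`v̂` then forces `f v̂ ≤ p / 2`. With `P = p v̄` and `G = g v̄` this gives `G ≥ P (1 - t / 2)`, and
together with `π G ≤ g v̂` it gives `G (1 - π t²) ≥ P (1 - t)`. For `s = √(1 - 1/π)` the first bound
settles `t ≤ 1 - s`, and the identity `2 (1 - t) - (1 + s) (1 - π t²) = (1 + s) π (t - (1 - s))²`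
settles `t > 1 - s`.
-/

open Set

theorem ConvexOn.map_smul_le_smul_of_map_zero {𝕜 E β : Type*} [Ring 𝕜] [PartialOrder 𝕜]
    [IsOrderedRing 𝕜] [AddCommMonoid E] [AddCommMonoid β] [PartialOrder β] [Module 𝕜 E]
    [Module 𝕜 β] {s : Set E} {f : E → β} (hf : ConvexOn 𝕜 s f) (h0 : 0 ∈ s) (hf0 : f 0 = 0)
    {x : E} (hx : x ∈ s) {a : 𝕜} (ha0 : 0 ≤ a) (ha1 : a ≤ 1) : f (a • x) ≤ a • f x := by
  simpa [hf0] using hf.2 h0 hx (sub_nonneg.2 ha1) ha0 (sub_add_cancel 1 a)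

def revenue (p : ℝ) (f : ℝ → ℝ) (v : ℝ) : ℝ := (p - f v) * v

section Revenue

variable {Δ p : ℝ} {f : ℝ → ℝ}

theorem le_revenue_mul (hf : ConvexOn ℝ (Icc 0 Δ) f) (hf0 : f 0 = 0) {x : ℝ}
    (hx : x ∈ Icc 0 Δ) {a : ℝ} (ha0 : 0 ≤ a) (ha1 : a ≤ 1) :
    (p - a * f x) * (a * x) ≤ revenue p f (a * x) := by
  have hfa : f (a * x) ≤ a * f x :=
    hf.map_smul_le_smul_of_map_zero ⟨le_rfl, hx.1.trans hx.2⟩ hf0 hx ha0 ha1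
  unfold revenue
  gcongr
  exact mul_nonneg ha0 hx.1

theorem two_mul_map_le_of_isMaxOn_revenue (hp : 0 < p) (hf : ConvexOn ℝ (Icc 0 Δ) f)
    (hf0 : f 0 = 0) {x : ℝ} (hx : x ∈ Icc 0 Δ) (hmax : IsMaxOn (revenue p f) (Icc 0 Δ) x) :
    2 * f x ≤ p := by
  rcases hx.1.eq_or_lt with rfl | hx0
  · linarith
  by_contra! hF
  have hF0 : 0 < f x := by linarith
  have ha0 : 0 ≤ p / (2 * f x) := by positivity
  have ha1 : p / (2 * f x) ≤ 1 := (div_le_one (by positivity)).2 hF.le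
  -- the quadratic `a ↦ (p - a f x) a x` peaks at `a = p / (2 f x) < 1`, above its value at `a = 1`
  have hle := (le_revenue_mul hf hf0 hx ha0 ha1).trans
    (hmax ⟨mul_nonneg ha0 hx.1, (mul_le_of_le_one_left hx.1 ha1).trans hx.2⟩)
  have hpeak : (p - p / (2 * f x) * f x) * (p / (2 * f x) * x) = p ^ 2 * x / (4 * f x) := by
    field_simp
    ring
  rw [hpeak, revenue, div_le_iff₀ (by positivity)] at hle
  nlinarith [mul_pos hx0 (mul_self_pos.2 (sub_pos.2 hF).ne')]

end Revenue

theorem mul_one_add_le_two_mul_of_bounds {P G t π s : ℝ} (hπ : 0 < π) (hs : 0 ≤ s)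
    (hπs : π * (1 - s ^ 2) = 1) (hP : 0 ≤ P) (ht : t ≤ 1)
    (hI : P * (1 - t / 2) ≤ G) (hII : P * (1 - t) ≤ G * (1 - π * t ^ 2)) :
    P * (1 + s) ≤ 2 * G := by
  rcases le_or_gt t (1 - s) with hts | hts
  · nlinarith
  have hsq : 2 * (1 - t) - (1 + s) * (1 - π * t ^ 2) = (1 + s) * π * (t - (1 - s)) ^ 2 := by
    linear_combination (2 * t - (1 - s)) * hπs
  rcases hP.eq_or_lt with rfl | hP
  · linarith
  by_contra! hG
  rcases le_or_gt 0 (1 - π * t ^ 2) with hπt | hπt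
  · nlinarith [mul_pos (mul_pos hP (by positivity : 0 < (1 + s) * π)) (pow_pos (sub_pos.2 hts) 2),
      mul_le_mul_of_nonneg_right hG.le hπt]
  · have hG : 0 < G := by nlinarith
    nlinarith [mul_neg_of_pos_of_neg hG hπt, mul_nonneg hP.le (sub_nonneg.2 ht)]

theorem mul_one_sub_sq_sqrt_one_sub_inv {π : ℝ} (hπ : 1 ≤ π) :
    π * (1 - √(1 - 1 / π) ^ 2) = 1 := by
  have hπ0 : 0 < π := one_pos.trans_le hπ
  rw [Real.sq_sqrt (sub_nonneg.2 ((div_le_one hπ0).2 hπ))]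
  field_simp
  ring

theorem stmt16_general (Δ p : ℝ) (hp : 0 < p)
    (f : ℝ → ℝ) (hf : ConvexOn ℝ (Set.Icc 0 Δ) f) (hf0 : f 0 = 0)
    (g : ℝ → ℝ) (hg : ∀ v, g v = (p - f v) * v)
    (vhat : ℝ) (hvhat : vhat ∈ Set.Icc 0 Δ) (hmax : IsMaxOn g (Set.Icc 0 Δ) vhat)
    (pi : ℝ) (hpi : 1 ≤ pi)
    (vb : ℝ) (hvb : vb ∈ Set.Icc 0 vhat) (hkeep : pi * g vb ≤ g vhat) :
    vb * p * (1 + Real.sqrt (1 - 1 / pi)) ≤ 2 * g vb := by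
  obtain rfl : g = revenue p f := funext hg
  obtain ⟨t, ⟨ht0, ht1⟩, rfl⟩ : ∃ t ∈ Icc (0 : ℝ) 1, vb = t * vhat := by
    have hvhat0 : 0 ≤ vhat := hvb.1.trans hvb.2
    refine ⟨vb / vhat, ⟨div_nonneg hvb.1 hvhat0, div_le_one_of_le₀ hvb.2 hvhat0⟩, ?_⟩
    exact (div_mul_cancel_of_imp fun h => le_antisymm (h ▸ hvb.2) hvb.1).symm
  have hF : 2 * f vhat ≤ p := two_mul_map_le_of_isMaxOn_revenue hp hf hf0 hvhat hmax
  have hG : (p - t * f vhat) * (t * vhat) ≤ revenue p f (t * vhat) :=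
    le_revenue_mul hf hf0 hvhat ht0 ht1
  have hI : p * (t * vhat) * (1 - t / 2) ≤ revenue p f (t * vhat) := by
    nlinarith [mul_nonneg (mul_nonneg ht0 ht0) hvhat.1]
  have hII : p * (t * vhat) * (1 - t) ≤ revenue p f (t * vhat) * (1 - pi * t ^ 2) := by
    have hkeep' : pi * revenue p f (t * vhat) ≤ (p - f vhat) * vhat := hkeep
    nlinarith [mul_le_mul_of_nonneg_left hkeep' (sq_nonneg t)]
  have hbound := mul_one_add_le_two_mul_of_bounds (one_pos.trans_le hpi) (Real.sqrt_nonneg _)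
    (mul_one_sub_sq_sqrt_one_sub_inv hpi) (mul_nonneg hp.le (mul_nonneg ht0 hvhat.1)) ht1 hI hII
  linarith [hbound]

/-- Per-slot selling bound for one-way trading with convex price elasticity
(Lemma 11 of the paper). -/
theorem stmt16 (Δ p : ℝ) (hΔ : 0 < Δ) (hp : 0 < p)
    (f : ℝ → ℝ) (hf : ConvexOn ℝ (Set.Icc 0 Δ) f) (hf0 : f 0 = 0)
    (hfnn : ∀ v ∈ Set.Icc (0:ℝ) Δ, 0 ≤ f v)
    (g : ℝ → ℝ) (hg : ∀ v, g v = (p - f v) * v)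
    (vhat : ℝ) (hvhat : vhat ∈ Set.Icc 0 Δ) (hmax : IsMaxOn g (Set.Icc 0 Δ) vhat)
    (pi : ℝ) (hpi : 1 ≤ pi)
    (vb : ℝ) (hvb : vb ∈ Set.Icc 0 vhat) (hkeep : pi * g vb ≤ g vhat) :
    vb * p * (1 + Real.sqrt (1 - 1 / pi)) ≤ 2 * g vb :=
  stmt16_general Δ p hp f hf hf0 g hg vhat hvhat hmax pi hpi vb hvb hkeep
end

section
/- Let π ≥ 1, p > 0, α > 0, and k ≥ 0 satisfy 4·α·k ≤ p²/π. Then p² − 4αk ≥ 0 and (p − √(p² − 4αk))/(2α) ≤ 2k/(p·(1 + √(1 − 1/π))). (This bounds the smaller root of the quadratic (p − αv)v = k, used to control the selling quantity of CR-Pursuit under linear price elasticity.) -/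
/-- Bound on the smaller root of the quadratic (p − αv)v = k. -/
theorem stmt17 (pi p α k : ℝ) (hpi : 1 ≤ pi) (hp : 0 < p) (hα : 0 < α)
    (hk : 0 ≤ k) (hbound : 4 * α * k ≤ p ^ 2 / pi) :
    0 ≤ p ^ 2 - 4 * α * k ∧
    (p - Real.sqrt (p ^ 2 - 4 * α * k)) / (2 * α) ≤
      2 * k / (p * (1 + Real.sqrt (1 - 1 / pi))) := by
  have hπpos : (0:ℝ) < pi := lt_of_lt_of_le one_pos hpi
  have hple : p ^ 2 / pi ≤ p ^ 2 := div_le_self (by positivity) hpi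
  have hD : 0 ≤ p ^ 2 - 4 * α * k := by linarith
  refine ⟨hD, ?_⟩
  set s := Real.sqrt (p ^ 2 - 4 * α * k) with hs
  have hs0 : 0 ≤ s := Real.sqrt_nonneg _
  have hs2 : s ^ 2 = p ^ 2 - 4 * α * k := Real.sq_sqrt hD
  have hak : 0 ≤ 4 * α * k := by positivity
  have hsp : s ≤ p := by nlinarith
  have h1π : (0:ℝ) ≤ 1 - 1 / pi := by
    have : 1 / pi ≤ 1 := by
      rw [div_le_one hπpos]; exact hpi
    linarith
  set t := Real.sqrt (1 - 1 / pi) with ht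
  have ht0 : 0 ≤ t := Real.sqrt_nonneg _
  have ht2 : t ^ 2 = 1 - 1 / pi := Real.sq_sqrt h1π
  -- s ≥ p * t
  have hst : p * t ≤ s := by
    have hsq : (p * t) ^ 2 ≤ s ^ 2 := by
      rw [hs2, mul_pow, ht2]
      have : p ^ 2 * (1 / pi) = p ^ 2 / pi := by ring
      nlinarith
    nlinarith [mul_nonneg hp.le ht0]
  have hden : 0 < p * (1 + t) := by positivity
  have hden2 : 0 < p + s := by linarith
  -- (p - s)/(2α) = 2k/(p+s)
  have hkey : (p - s) / (2 * α) = 2 * k / (p + s) := by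
    rw [div_eq_div_iff (by positivity) (by positivity)]
    nlinarith
  rw [hkey]
  have hk2 : (0:ℝ) ≤ 2 * k := by linarith
  apply div_le_div_of_nonneg_left hk2 hden
  nlinarith
end
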